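/- arXiv:1104.0615 — 4 statements merged into one kernel-verified Lean document; each statement's English description precedes it below -/
import Mathlib

section
/- For a normalized polynomial P = Σ_{l=m}^n c_l p_l (m ≥ 1, ‖P‖_w = 1) in L²([-1,1], w dx), the variance var(P) = ∫ x²|P|² w dx − ε(P)² satisfies var(P) = c^H (J_n^m)² c + b_m² |c_m|² + b_{n+1}² |c_n|² − (c^H J_n^m c)², where c = (c_m,...,c_n)^T. -/
open MeasureTheory intervalIntegral

noncomputable def cE (m n : ℕ) (c : ℕ → ℝ) : ℕ → ℝ :=
  fun l => if m ≤ l then (if l ≤ n then c l else 0) else 0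

noncomputable def dC (a b : ℕ → ℝ) (m n : ℕ) (c : ℕ → ℝ) : ℕ → ℝ :=
  fun k => b (k+1) * cE m n c (k+1) + a k * cE m n c k + b k * cE m n c (k-1)

section
variable (a b : ℕ → ℝ) (m n : ℕ) (c : ℕ → ℝ)

lemma dC_left (hm : 1 ≤ m) (hmn : m ≤ n) : dC a b m n c (m-1) = b m * c m := by
  simp only [dC, cE, show m-1+1 = m from by omega]
  split_ifs <;> (first | ring1 | (exfalso; omega))

lemma dC_right (hmn : m ≤ n) : dC a b m n c (n+1) = b (n+1) * c n := by
  simp only [dC, cE, show n+1-1 = n from by omega]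
  split_ifs <;> (first | ring1 | (exfalso; omega))

lemma dC_zero (hm : 1 ≤ m) (k : ℕ) (hk : k + 1 < m ∨ n + 1 < k) : dC a b m n c k = 0 := by
  simp only [dC, cE]
  split_ifs <;> (first | ring1 | (exfalso; omega))

lemma dC_mid (hm : 1 ≤ m) (hmn : m ≤ n) (i : ℕ) (hi : i < n - m + 1) :
    dC a b m n c (m + i)
      = (if i + 1 < n - m + 1 then b (m + i + 1) * c (m + i + 1) else 0)
        + a (m + i) * c (m + i)
        + (if 1 ≤ i then b (m + i) * c (m + i - 1) else 0) := by
  simp only [dC, cE]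
  split_ifs <;> (first | ring1 | (exfalso; omega))

end

lemma mulVec_eq (a b : ℕ → ℝ) (m n : ℕ) (c : ℕ → ℝ) (hm : 1 ≤ m) (hmn : m ≤ n)
    (J : Matrix (Fin (n - m + 1)) (Fin (n - m + 1)) ℝ)
    (hJ : J = Matrix.of (fun i j : Fin (n - m + 1) =>
      if (i : ℕ) = (j : ℕ) then a (m + (i : ℕ))
      else if (i : ℕ) + 1 = (j : ℕ) then b (m + (j : ℕ))
      else if (j : ℕ) + 1 = (i : ℕ) then b (m + (i : ℕ)) else 0))
    (cv : Fin (n - m + 1) → ℝ) (hcv : ∀ i, cv i = c (m + (i : ℕ))) :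
    ∀ i : Fin (n - m + 1), J.mulVec cv i = dC a b m n c (m + (i : ℕ)) := by
  intro i
  obtain ⟨i0, hi0⟩ := i
  rw [dC_mid a b m n c hm hmn i0 hi0]
  subst hJ
  simp only [Matrix.mulVec, dotProduct, Matrix.of_apply, hcv]
  rw [Fin.sum_univ_eq_sum_range (fun j =>
    (if i0 = j then a (m + i0) else if i0 + 1 = j then b (m + j)
      else if j + 1 = i0 then b (m + i0) else 0) * c (m + j)) (n - m + 1)]
  have hsplit : ∀ j : ℕ,
      (if i0 = j then a (m + i0) else if i0 + 1 = j then b (m + j)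
        else if j + 1 = i0 then b (m + i0) else 0) * c (m + j)
      = (if j = i0 then a (m + i0) * c (m + i0) else 0)
        + (if j = i0 + 1 then b (m + i0 + 1) * c (m + i0 + 1) else 0)
        + (if j + 1 = i0 then b (m + i0) * c (m + j) else 0) := by
    intro j
    by_cases h1 : i0 = j
    · subst h1
      rw [if_pos rfl, if_pos rfl, if_neg (by omega), if_neg (by omega)]
      ring1
    · rw [if_neg h1, if_neg (by omega : ¬ j = i0)]
      by_cases h2 : i0 + 1 = j
      · subst h2
        rw [if_pos rfl, if_pos rfl, if_neg (by omega)]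
        simp only [← Nat.add_assoc]
        ring1
      · rw [if_neg h2, if_neg (by omega : ¬ j = i0 + 1)]
        by_cases h3 : j + 1 = i0
        · rw [if_pos h3, if_pos h3]; ring1
        · rw [if_neg h3, if_neg h3]; ring1
  rw [Finset.sum_congr rfl (fun j _ => hsplit j), Finset.sum_add_distrib,
    Finset.sum_add_distrib]
  rw [Finset.sum_ite_eq' (Finset.range (n - m + 1)) i0 (fun _ => a (m + i0) * c (m + i0)),
    Finset.sum_ite_eq' (Finset.range (n - m + 1)) (i0 + 1)
      (fun _ => b (m + i0 + 1) * c (m + i0 + 1)),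
    if_pos (Finset.mem_range.mpr hi0)]
  simp only [Finset.mem_range]
  rcases i0 with _ | i0'
  · simp
    try ring1
  · have e1 : ∀ j : ℕ, (j + 1 = i0' + 1) = (j = i0') := by intro j; simp
    simp only [e1]
    rw [Finset.sum_ite_eq' (Finset.range (n - m + 1)) i0'
      (fun j => b (m + (i0' + 1)) * c (m + j)), if_pos (Finset.mem_range.mpr (by omega))]
    rw [if_pos (by omega : 1 ≤ i0' + 1), show m + (i0' + 1) - 1 = m + i0' from by omega]
    simp only [← Nat.add_assoc]
    ring1

lemma intg_pp (w : ℝ → ℝ) (a b : ℕ → ℝ) (hb : ∀ j, 0 < b j) (p : ℕ → ℝ → ℝ)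
    (horth : ∀ k l : ℕ, ∫ x in (-1 : ℝ)..1, p k x * p l x * w x = if k = l then 1 else 0)
    (hint1 : ∀ k l : ℕ, IntervalIntegrable (fun x => x * p k x * p l x * w x) volume (-1 : ℝ) 1)
    (hrec0 : ∀ x : ℝ, x * p 0 x = b 1 * p 1 x + a 0 * p 0 x)
    (hrec : ∀ l : ℕ, ∀ x : ℝ,
      x * p (l + 1) x = b (l + 2) * p (l + 2) x + a (l + 1) * p (l + 1) x + b (l + 1) * p l x) :
    ∀ k l : ℕ, IntervalIntegrable (fun x => p k x * p l x * w x) volume (-1:ℝ) 1 := by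
  have hself : ∀ k, IntervalIntegrable (fun x => p k x * p k x * w x) volume (-1:ℝ) 1 := by
    intro k
    by_contra h
    have h0 := intervalIntegral.integral_undef h
    have h1 := horth k k
    rw [h0] at h1
    simp at h1
  have h0 : ∀ l, IntervalIntegrable (fun x => p 0 x * p l x * w x) volume (-1:ℝ) 1 := by
    intro l
    induction l using Nat.strong_induction_on with
    | _ l ih =>
      rcases l with _ | l
      · exact hself 0
      rcases l with _ | l
      · have key : (fun x => p 0 x * p 1 x * w x)
            = fun x => (b 1)⁻¹ * (x * p 0 x * p 0 x * w x - a 0 * (p 0 x * p 0 x * w x)) := by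
          funext x
          have h := hrec0 x
          have hb1 : b 1 ≠ 0 := (hb 1).ne'
          field_simp
          linear_combination (-(p 0 x * w x)) * h
        rw [key]
        exact ((hint1 0 0).sub ((hself 0).const_mul (a 0))).const_mul _
      · have key : (fun x => p 0 x * p (l+2) x * w x)
            = fun x => (b (l+2))⁻¹ * (x * p (l+1) x * p 0 x * w x
                - a (l+1) * (p 0 x * p (l+1) x * w x) - b (l+1) * (p 0 x * p l x * w x)) := by
          funext x
          have h := hrec l x
          have hbl : b (l+2) ≠ 0 := (hb (l+2)).ne'
          field_simp
          linear_combination (-(p 0 x * w x)) * h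
        rw [key]
        exact (((hint1 (l+1) 0).sub ((ih (l+1) (by omega)).const_mul _)).sub
          ((ih l (by omega)).const_mul _)).const_mul _
  intro k
  induction k using Nat.strong_induction_on with
  | _ k ih =>
    intro l
    rcases k with _ | k
    · exact h0 l
    rcases k with _ | k
    · have key : (fun x => p 1 x * p l x * w x)
          = fun x => (b 1)⁻¹ * (x * p 0 x * p l x * w x - a 0 * (p 0 x * p l x * w x)) := by
        funext x
        have h := hrec0 x
        have hb1 : b 1 ≠ 0 := (hb 1).ne'
        field_simp
        linear_combination (-(p l x * w x)) * h
      rw [key]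
      exact ((hint1 0 l).sub ((h0 l).const_mul _)).const_mul _
    · have key : (fun x => p (k+2) x * p l x * w x)
          = fun x => (b (k+2))⁻¹ * (x * p (k+1) x * p l x * w x
              - a (k+1) * (p (k+1) x * p l x * w x) - b (k+1) * (p k x * p l x * w x)) := by
        funext x
        have h := hrec k x
        have hbl : b (k+2) ≠ 0 := (hb (k+2)).ne'
        field_simp
        linear_combination (-(p l x * w x)) * h
      rw [key]
      exact (((hint1 (k+1) l).sub ((ih (k+1) (by omega) l).const_mul _)).sub
        ((ih k (by omega) l).const_mul _)).const_mul _

lemma ortho_sum (w : ℝ → ℝ) (p : ℕ → ℝ → ℝ)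
    (horth : ∀ k l : ℕ, ∫ x in (-1 : ℝ)..1, p k x * p l x * w x = if k = l then 1 else 0)
    (hpp : ∀ k l : ℕ, IntervalIntegrable (fun x => p k x * p l x * w x) volume (-1:ℝ) 1)
    (N : ℕ) (u v : ℕ → ℝ) :
    ∫ x in (-1:ℝ)..1, (∑ k ∈ Finset.range N, u k * p k x) * (∑ l ∈ Finset.range N, v l * p l x) * w x
      = ∑ k ∈ Finset.range N, u k * v k := by
  have hII : ∀ k : ℕ, IntervalIntegrable
      (fun x => ∑ l ∈ Finset.range N, (u k * v l) * (p k x * p l x * w x)) volume (-1:ℝ) 1 := by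
    intro k
    have hfun : (fun x => ∑ l ∈ Finset.range N, (u k * v l) * (p k x * p l x * w x))
        = (∑ l ∈ Finset.range N, fun x => (u k * v l) * (p k x * p l x * w x)) := by
      funext x; simp [Finset.sum_apply]
    rw [hfun]
    exact IntervalIntegrable.sum _ fun l _ => (hpp k l).const_mul _
  have key : ∀ x:ℝ, (∑ k ∈ Finset.range N, u k * p k x) * (∑ l ∈ Finset.range N, v l * p l x) * w x
      = ∑ k ∈ Finset.range N, ∑ l ∈ Finset.range N, (u k * v l) * (p k x * p l x * w x) := by
    intro x
    rw [Finset.sum_mul_sum, Finset.sum_mul]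
    exact Finset.sum_congr rfl fun k _ => by
      rw [Finset.sum_mul]
      exact Finset.sum_congr rfl fun l _ => by ring
  simp only [key]
  rw [intervalIntegral.integral_finset_sum]
  · have inner : ∀ k ∈ Finset.range N,
        (∫ x in (-1:ℝ)..1, ∑ l ∈ Finset.range N, (u k * v l) * (p k x * p l x * w x))
          = u k * v k := by
      intro k hk
      rw [intervalIntegral.integral_finset_sum]
      · have : ∀ l ∈ Finset.range N,
            (∫ x in (-1:ℝ)..1, (u k * v l) * (p k x * p l x * w x))
              = if k = l then u k * v l else 0 := by
          intro l _
          rw [intervalIntegral.integral_const_mul, horth k l]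
          split_ifs <;> ring
        rw [Finset.sum_congr rfl this, Finset.sum_ite_eq (Finset.range N) k (fun l => u k * v l),
          if_pos hk]
      · exact fun l _ => (hpp k l).const_mul _
    exact Finset.sum_congr rfl inner
  · intro k _
    exact hII k

/-- Variance characterization for `P = ∑_{l=m}^n c_l p_l`, `m ≥ 1`, `‖P‖_w = 1`:
`var(P) = cᵀ (J_n^m)² c + b_m² c_m² + b_{n+1}² c_n² - (cᵀ J_n^m c)²`. -/
theorem stmt4 (w : ℝ → ℝ) (hw : ∀ x ∈ Set.Icc (-1 : ℝ) 1, 0 < w x)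
    (a b : ℕ → ℝ) (hb : ∀ j, 0 < b j)
    (p : ℕ → ℝ → ℝ)
    (horth : ∀ k l : ℕ, ∫ x in (-1 : ℝ)..1, p k x * p l x * w x = if k = l then 1 else 0)
    (hint1 : ∀ k l : ℕ,
      IntervalIntegrable (fun x => x * p k x * p l x * w x) volume (-1 : ℝ) 1)
    (hint2 : ∀ k l : ℕ,
      IntervalIntegrable (fun x => x ^ 2 * p k x * p l x * w x) volume (-1 : ℝ) 1)
    (hrec0 : ∀ x : ℝ, x * p 0 x = b 1 * p 1 x + a 0 * p 0 x)
    (hrec : ∀ l : ℕ, ∀ x : ℝ,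
      x * p (l + 1) x = b (l + 2) * p (l + 2) x + a (l + 1) * p (l + 1) x + b (l + 1) * p l x)
    (m n : ℕ) (hm : 1 ≤ m) (hmn : m ≤ n) (c : ℕ → ℝ)
    (P : ℝ → ℝ) (hP : ∀ x, P x = ∑ l ∈ Finset.Icc m n, c l * p l x)
    (hnorm : ∫ x in (-1 : ℝ)..1, (P x) ^ 2 * w x = 1)
    (J : Matrix (Fin (n - m + 1)) (Fin (n - m + 1)) ℝ)
    (hJ : J = Matrix.of (fun i j : Fin (n - m + 1) =>
      if (i : ℕ) = (j : ℕ) then a (m + (i : ℕ))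
      else if (i : ℕ) + 1 = (j : ℕ) then b (m + (j : ℕ))
      else if (j : ℕ) + 1 = (i : ℕ) then b (m + (i : ℕ)) else 0))
    (cv : Fin (n - m + 1) → ℝ) (hcv : ∀ i, cv i = c (m + (i : ℕ))) :
    (∫ x in (-1 : ℝ)..1, x ^ 2 * (P x) ^ 2 * w x) -
        (∫ x in (-1 : ℝ)..1, x * (P x) ^ 2 * w x) ^ 2 =
      dotProduct cv ((J * J).mulVec cv) + (b m) ^ 2 * (c m) ^ 2
        + (b (n + 1)) ^ 2 * (c n) ^ 2 - (dotProduct cv (J.mulVec cv)) ^ 2 := by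
  have hpp := intg_pp w a b hb p horth hint1 hrec0 hrec
  have h0 : cE m n c 0 = 0 := by
    simp only [cE]; split_ifs <;> (first | rfl | (exfalso; omega))
  have hTop : ∀ k : ℕ, n < k → cE m n c k = 0 := by
    intro k hk
    simp only [cE]; split_ifs <;> (first | rfl | (exfalso; omega))
  -- expansion of P over range (n+2)
  have hP' : ∀ x, P x = ∑ l ∈ Finset.range (n+2), cE m n c l * p l x := by
    intro x
    rw [hP x]
    have e1 : ∑ l ∈ Finset.Icc m n, c l * p l x
        = ∑ l ∈ Finset.Icc m n, cE m n c l * p l x := by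
      refine Finset.sum_congr rfl fun l hl => ?_
      rcases Finset.mem_Icc.mp hl with ⟨ha1, ha2⟩
      simp [cE, ha1, ha2]
    rw [e1]
    refine Finset.sum_subset (fun k hk => Finset.mem_range.mpr ?_) (fun l _ hl => ?_)
    · rcases Finset.mem_Icc.mp hk with ⟨_, h2⟩; omega
    · have hz : cE m n c l = 0 := by
        rw [Finset.mem_Icc] at hl
        simp only [cE]; split_ifs <;> (first | rfl | (exfalso; omega))
      rw [hz, zero_mul]
  -- expansion of x * P over range (n+2)
  have hxP : ∀ x, x * P x = ∑ k ∈ Finset.range (n+2), dC a b m n c k * p k x := by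
    intro x
    rw [hP' x, Finset.mul_sum]
    have step : ∀ l ∈ Finset.range (n+2),
        x * (cE m n c l * p l x)
          = cE m n c l * (b (l+1) * p (l+1) x) + cE m n c l * (a l * p l x)
            + cE m n c l * (b l * p (l-1) x) := by
      intro l _
      rcases l with _ | l'
      · rw [h0]; ring1
      · have h := hrec l' x
        have e : l' + 1 - 1 = l' := rfl
        rw [e]
        linear_combination cE m n c (l'+1) * h
    rw [Finset.sum_congr rfl step, Finset.sum_add_distrib, Finset.sum_add_distrib]
    have target : ∀ k ∈ Finset.range (n+2),
        dC a b m n c k * p k x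
          = b (k+1) * cE m n c (k+1) * p k x + a k * cE m n c k * p k x
            + b k * cE m n c (k-1) * p k x := by
      intro k _; simp only [dC]; ring1
    rw [Finset.sum_congr rfl target, Finset.sum_add_distrib, Finset.sum_add_distrib]
    have eS1T3 :
        (∑ l ∈ Finset.range (n+2), cE m n c l * (b (l+1) * p (l+1) x))
          = ∑ k ∈ Finset.range (n+2), b k * cE m n c (k-1) * p k x := by
      rw [Finset.sum_range_succ, hTop (n+1) (by omega), zero_mul, add_zero]
      rw [Finset.sum_range_succ' (fun k => b k * cE m n c (k-1) * p k x) (n+1)]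
      rw [show (0:ℕ) - 1 = 0 from rfl, h0]
      simp only [Nat.add_sub_cancel, mul_zero, zero_mul, add_zero]
      exact Finset.sum_congr rfl fun l _ => by ring1
    have eS2T2 :
        (∑ l ∈ Finset.range (n+2), cE m n c l * (a l * p l x))
          = ∑ k ∈ Finset.range (n+2), a k * cE m n c k * p k x :=
      Finset.sum_congr rfl fun l _ => by ring1
    have eS3T1 :
        (∑ l ∈ Finset.range (n+2), cE m n c l * (b l * p (l-1) x))
          = ∑ k ∈ Finset.range (n+2), b (k+1) * cE m n c (k+1) * p k x := by
      rw [Finset.sum_range_succ' (fun l => cE m n c l * (b l * p (l-1) x)) (n+1)]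
      rw [h0, zero_mul, add_zero]
      rw [Finset.sum_range_succ (fun k => b (k+1) * cE m n c (k+1) * p k x) (n+1)]
      rw [hTop (n+1+1) (by omega), mul_zero, zero_mul, add_zero]
      simp only [Nat.add_sub_cancel]
      exact Finset.sum_congr rfl fun l _ => by ring1
    rw [eS1T3, eS2T2, eS3T1]
    ring1
  -- integral computations
  have hI2 : (∫ x in (-1:ℝ)..1, x ^ 2 * P x ^ 2 * w x)
      = ∑ k ∈ Finset.range (n+2), dC a b m n c k * dC a b m n c k := by
    have e : (fun x : ℝ => x ^ 2 * P x ^ 2 * w x)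
        = fun x => (∑ k ∈ Finset.range (n+2), dC a b m n c k * p k x)
            * (∑ l ∈ Finset.range (n+2), dC a b m n c l * p l x) * w x := by
      funext x; rw [← hxP x]; ring1
    rw [e]
    exact ortho_sum w p horth hpp (n+2) _ _
  have hI1 : (∫ x in (-1:ℝ)..1, x * P x ^ 2 * w x)
      = ∑ k ∈ Finset.range (n+2), dC a b m n c k * cE m n c k := by
    have e : (fun x : ℝ => x * P x ^ 2 * w x)
        = fun x => (∑ k ∈ Finset.range (n+2), dC a b m n c k * p k x)
            * (∑ l ∈ Finset.range (n+2), cE m n c l * p l x) * w x := by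
      funext x; rw [← hxP x, ← hP' x]; ring1
    rw [e]
    exact ortho_sum w p horth hpp (n+2) _ _
  -- matrix identities
  have hMv := mulVec_eq a b m n c hm hmn J hJ cv hcv
  have hsym : J.transpose = J := by
    subst hJ
    ext i j
    simp only [Matrix.transpose_apply, Matrix.of_apply]
    split_ifs <;> (first | rfl | (congr 1; omega) | (exfalso; omega))
  have hvm : Matrix.vecMul cv J = J.mulVec cv := by
    conv_lhs => rw [← hsym]
    rw [Matrix.vecMul_transpose]
  have hdot1 : dotProduct cv (J.mulVec cv)
      = ∑ i ∈ Finset.range (n - m + 1), dC a b m n c (m + i) * c (m + i) := by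
    rw [dotProduct]
    have e : ∀ i : Fin (n - m + 1), cv i * J.mulVec cv i
        = dC a b m n c (m + (i:ℕ)) * c (m + (i:ℕ)) := by
      intro i; rw [hcv i, hMv i]; ring1
    rw [Finset.sum_congr rfl (fun i _ => e i)]
    exact Fin.sum_univ_eq_sum_range (fun i => dC a b m n c (m + i) * c (m + i)) (n - m + 1)
  have hdot2 : dotProduct cv ((J * J).mulVec cv)
      = ∑ i ∈ Finset.range (n - m + 1), dC a b m n c (m + i) * dC a b m n c (m + i) := by
    rw [← Matrix.mulVec_mulVec, Matrix.dotProduct_mulVec, hvm, dotProduct]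
    have e : ∀ i : Fin (n - m + 1), J.mulVec cv i * J.mulVec cv i
        = dC a b m n c (m + (i:ℕ)) * dC a b m n c (m + (i:ℕ)) := by
      intro i; rw [hMv i]
    rw [Finset.sum_congr rfl (fun i _ => e i)]
    exact Fin.sum_univ_eq_sum_range
      (fun i => dC a b m n c (m + i) * dC a b m n c (m + i)) (n - m + 1)
  -- reduce range (n+2) sums
  have hIccR : ∀ f : ℕ → ℝ, (∑ k ∈ Finset.Icc m n, f k)
      = ∑ i ∈ Finset.range (n - m + 1), f (m + i) := by
    intro f
    rw [← Finset.Ico_add_one_right_eq_Icc, Finset.sum_Ico_eq_sum_range,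
      show n + 1 - m = n - m + 1 from by omega]
  have hred1 : ∑ k ∈ Finset.range (n+2), dC a b m n c k * cE m n c k
      = ∑ i ∈ Finset.range (n - m + 1), dC a b m n c (m + i) * c (m + i) := by
    have e1 : ∑ k ∈ Finset.Icc m n, dC a b m n c k * cE m n c k
        = ∑ k ∈ Finset.range (n+2), dC a b m n c k * cE m n c k := by
      refine Finset.sum_subset (fun k hk => Finset.mem_range.mpr ?_) (fun k _ hk => ?_)
      · rcases Finset.mem_Icc.mp hk with ⟨_, h2⟩; omega
      · have hz : cE m n c k = 0 := by
          rw [Finset.mem_Icc] at hk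
          simp only [cE]; split_ifs <;> (first | rfl | (exfalso; omega))
        rw [hz, mul_zero]
    rw [← e1]
    have e2 : ∑ k ∈ Finset.Icc m n, dC a b m n c k * cE m n c k
        = ∑ k ∈ Finset.Icc m n, dC a b m n c k * c k := by
      refine Finset.sum_congr rfl fun k hk => ?_
      rcases Finset.mem_Icc.mp hk with ⟨ha1, ha2⟩
      simp [cE, ha1, ha2]
    rw [e2, hIccR (fun k => dC a b m n c k * c k)]
  have hred2 : ∑ k ∈ Finset.range (n+2), dC a b m n c k * dC a b m n c k
      = dC a b m n c (m-1) * dC a b m n c (m-1)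
        + (dC a b m n c (n+1) * dC a b m n c (n+1)
        + ∑ i ∈ Finset.range (n - m + 1), dC a b m n c (m + i) * dC a b m n c (m + i)) := by
    have hni1 : (m-1) ∉ insert (n+1) (Finset.Icc m n) := by
      simp only [Finset.mem_insert, Finset.mem_Icc]; omega
    have hni2 : (n+1) ∉ Finset.Icc m n := by
      simp only [Finset.mem_Icc]; omega
    have e1 : ∑ k ∈ insert (m-1) (insert (n+1) (Finset.Icc m n)),
          dC a b m n c k * dC a b m n c k
        = ∑ k ∈ Finset.range (n+2), dC a b m n c k * dC a b m n c k := by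
      refine Finset.sum_subset (fun k hk => Finset.mem_range.mpr ?_) (fun k _ hk => ?_)
      · simp only [Finset.mem_insert, Finset.mem_Icc] at hk; omega
      · simp only [Finset.mem_insert, Finset.mem_Icc] at hk
        push_neg at hk
        rw [dC_zero a b m n c hm k (by omega), zero_mul]
    rw [← e1, Finset.sum_insert hni1, Finset.sum_insert hni2,
      hIccR (fun k => dC a b m n c k * dC a b m n c k)]
  -- final assembly
  rw [hI2, hI1, hred1, hred2, ← hdot1, ← hdot2,
    dC_left a b m n c hm hmn, dC_right a b m n c hmn]
  ring1
end

section
/- Let J be a real symmetric matrix, c a unit eigenvector of J with eigenvalue λ, and suppose v satisfies v^T v = c^T J² c + r for some r ≥ 0. Then c^T J² c − (c^T J c)² = 0; consequently, for the eigenfunction coefficient vector c_k of the Jacobi matrix J_n^m with eigenvalue x_{n,k}^m, the variance var(ψ_{n,k}^m) = b_m² |c_{m,k}|² + b_{n+1}² |c_{n,k}|², i.e. var(ψ_{n,k}^m) = (b_{n+1}² p_{n-m}(x_{n,k}^m,m)² + b_m²) / Σ_{l=0}^{n-m} p_l(x_{n,k}^m,m)². -/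
open MeasureTheory intervalIntegral

private lemma aux_int (w : ℝ → ℝ) (a b : ℕ → ℝ) (hb : ∀ j, 0 < b j) (p : ℕ → ℝ → ℝ)
    (horth : ∀ k l : ℕ, ∫ x in (-1 : ℝ)..1, p k x * p l x * w x = if k = l then 1 else 0)
    (hint1 : ∀ k l : ℕ,
      IntervalIntegrable (fun x => x * p k x * p l x * w x) volume (-1 : ℝ) 1)
    (hrec0 : ∀ x : ℝ, x * p 0 x = b 1 * p 1 x + a 0 * p 0 x)
    (hrec : ∀ l : ℕ, ∀ x : ℝ,
      x * p (l + 1) x = b (l + 2) * p (l + 2) x + a (l + 1) * p (l + 1) x + b (l + 1) * p l x) :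
    ∀ k l : ℕ, IntervalIntegrable (fun x => p k x * p l x * w x) volume (-1 : ℝ) 1 := by
  have hsym : ∀ k l : ℕ,
      IntervalIntegrable (fun x => p k x * p l x * w x) volume (-1 : ℝ) 1 →
      IntervalIntegrable (fun x => p l x * p k x * w x) volume (-1 : ℝ) 1 := by
    intro k l h
    have : (fun x => p l x * p k x * w x) = fun x => p k x * p l x * w x := by
      funext x; ring
    rw [this]; exact h
  have step : ∀ k j : ℕ,
      IntervalIntegrable (fun x => p k x * p j x * w x) volume (-1 : ℝ) 1 →
      IntervalIntegrable (fun x => p (k+1) x * p j x * w x) volume (-1 : ℝ) 1 →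
      IntervalIntegrable (fun x => p (k+2) x * p j x * w x) volume (-1 : ℝ) 1 := by
    intro k j h0 h1
    have key : (fun x => p (k+2) x * p j x * w x)
        = fun x => (b (k+2))⁻¹ * (x * p (k+1) x * p j x * w x
            - a (k+1) * (p (k+1) x * p j x * w x) - b (k+1) * (p k x * p j x * w x)) := by
      funext x
      have hbne := (hb (k+2)).ne'
      have hp : p (k+2) x = (b (k+2))⁻¹ * (x * p (k+1) x - a (k+1) * p (k+1) x - b (k+1) * p k x) := by
        field_simp
        linarith [hrec k x]
      rw [hp]; ring
    rw [key]
    exact (((hint1 (k+1) j).sub (h1.const_mul _)).sub (h0.const_mul _)).const_mul _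
  have step01 : ∀ j : ℕ,
      IntervalIntegrable (fun x => p 0 x * p j x * w x) volume (-1 : ℝ) 1 →
      IntervalIntegrable (fun x => p 1 x * p j x * w x) volume (-1 : ℝ) 1 := by
    intro j h0
    have key : (fun x => p 1 x * p j x * w x)
        = fun x => (b 1)⁻¹ * (x * p 0 x * p j x * w x - a 0 * (p 0 x * p j x * w x)) := by
      funext x
      have hbne := (hb 1).ne'
      have hp : p 1 x = (b 1)⁻¹ * (x * p 0 x - a 0 * p 0 x) := by
        field_simp
        linarith [hrec0 x]
      rw [hp]; ring
    rw [key]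
    exact ((hint1 0 j).sub (h0.const_mul _)).const_mul _
  have h00 : IntervalIntegrable (fun x => p 0 x * p 0 x * w x) volume (-1 : ℝ) 1 := by
    by_contra h
    have := intervalIntegral.integral_undef h
    rw [horth 0 0] at this
    simp at this
  have col0 : ∀ k : ℕ, IntervalIntegrable (fun x => p k x * p 0 x * w x) volume (-1 : ℝ) 1 := by
    have pair : ∀ k : ℕ, IntervalIntegrable (fun x => p k x * p 0 x * w x) volume (-1 : ℝ) 1 ∧
        IntervalIntegrable (fun x => p (k+1) x * p 0 x * w x) volume (-1 : ℝ) 1 := by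
      intro k
      induction k with
      | zero => exact ⟨h00, step01 0 h00⟩
      | succ k ih => exact ⟨ih.2, step k 0 ih.1 ih.2⟩
    exact fun k => (pair k).1
  intro k
  have pair : ∀ l : ℕ, IntervalIntegrable (fun x => p k x * p l x * w x) volume (-1 : ℝ) 1 ∧
      IntervalIntegrable (fun x => p k x * p (l+1) x * w x) volume (-1 : ℝ) 1 := by
    intro l
    induction l with
    | zero => exact ⟨col0 k, hsym _ _ (step01 k (hsym _ _ (col0 k)))⟩
    | succ l ih => exact ⟨ih.2, hsym _ _ (step l k (hsym _ _ ih.1) (hsym _ _ ih.2))⟩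
  exact fun l => (pair l).1

private lemma aux_A (a b : ℕ → ℝ) (p : ℕ → ℝ → ℝ)
    (hrec : ∀ l : ℕ, ∀ x : ℝ,
      x * p (l + 1) x = b (l + 2) * p (l + 2) x + a (l + 1) * p (l + 1) x + b (l + 1) * p l x)
    (m : ℕ) (hm : 1 ≤ m)
    (q : ℕ → ℝ → ℝ)
    (hq0 : ∀ x, q 0 x = 1)
    (hq1 : ∀ x, b (m + 1) * q 1 x = (x - a m) * q 0 x)
    (hqrec : ∀ l : ℕ, 1 ≤ l → ∀ x, b (m + l + 1) * q (l + 1) x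
      = (x - a (m + l)) * q l x - b (m + l) * q (l - 1) x)
    (xs : ℝ) :
    ∀ (Nn : ℕ) (x : ℝ), ∑ j ∈ Finset.range (Nn+1), q j xs * (x * p (m+j) x)
      = xs * ∑ j ∈ Finset.range (Nn+1), q j xs * p (m+j) x + b m * p (m-1) x
        + b (m+Nn+1) * (q Nn xs * p (m+Nn+1) x - q (Nn+1) xs * p (m+Nn) x) := by
  obtain ⟨m', rfl⟩ : ∃ m', m = m' + 1 := ⟨m - 1, (Nat.succ_pred_eq_of_pos hm).symm⟩
  intro Nn
  induction Nn with
  | zero =>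
    intro x
    simp only [zero_add, Finset.sum_range_one, add_zero, hq0, one_mul,
      Nat.add_sub_cancel]
    have h1 := hrec m' x
    have h2 := hq1 xs
    rw [hq0] at h2
    have e1 : m' + 1 + 0 = m' + 1 := by ring
    have e2 : m' + 1 + 0 + 1 = m' + 1 + 1 := by ring
    rw [e1, e2]
    linear_combination h1 + p (m' + 1) x * h2
  | succ Nn ih =>
    intro x
    rw [Finset.sum_range_succ, Finset.sum_range_succ (fun j => q j xs * p (m'+1+j) x)]
    have h1 := hrec (m' + 1 + Nn) x
    have h2 := hqrec (Nn + 1) (Nat.le_add_left 1 Nn) xs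
    simp only [Nat.add_sub_cancel] at h2
    have ihx := ih x
    simp only [show m'+1+(Nn+1) = m'+1+Nn+1 from by ring,
      show m'+1+(Nn+1)+1 = m'+1+Nn+2 from by ring,
      show m'+1+Nn+1+1 = m'+1+Nn+2 from by ring,
      show Nn+1+1 = Nn+2 from by ring] at h2 ⊢
    linear_combination ihx + q (Nn+1) xs * h1 + p (m'+1+Nn+1) x * h2

set_option maxHeartbeats 1000000 in
/-- For a unit eigenvector `c` of a real symmetric matrix `J` (and any vector
`v` with `vᵀv = cᵀJ²c + r`, `r ≥ 0`) one has `cᵀJ²c - (cᵀJc)² = 0`; consequently, the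
variance of the eigenfunction `ψ_{n,k}^m` equals
`(b_{n+1}² p_{n-m}(x*,m)² + b_m²) / ∑_{l=0}^{n-m} p_l(x*,m)²`. -/
theorem stmt5
    -- abstract part
    (N : ℕ) (Jm : Matrix (Fin N) (Fin N) ℝ) (hJsym : Jm.IsSymm)
    (cvec : Fin N → ℝ) (hcnorm : dotProduct cvec cvec = 1)
    (lam : ℝ) (heig : Jm.mulVec cvec = lam • cvec)
    (v : Fin N → ℝ) (r : ℝ) (hr : 0 ≤ r)
    (hv : dotProduct v v = dotProduct cvec ((Jm * Jm).mulVec cvec) + r)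
    -- orthonormal polynomial setting
    (w : ℝ → ℝ) (hw : ∀ x ∈ Set.Icc (-1 : ℝ) 1, 0 < w x)
    (a b : ℕ → ℝ) (hb : ∀ j, 0 < b j)
    (p : ℕ → ℝ → ℝ)
    (horth : ∀ k l : ℕ, ∫ x in (-1 : ℝ)..1, p k x * p l x * w x = if k = l then 1 else 0)
    (hint1 : ∀ k l : ℕ,
      IntervalIntegrable (fun x => x * p k x * p l x * w x) volume (-1 : ℝ) 1)
    (hint2 : ∀ k l : ℕ,
      IntervalIntegrable (fun x => x ^ 2 * p k x * p l x * w x) volume (-1 : ℝ) 1)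
    (hrec0 : ∀ x : ℝ, x * p 0 x = b 1 * p 1 x + a 0 * p 0 x)
    (hrec : ∀ l : ℕ, ∀ x : ℝ,
      x * p (l + 1) x = b (l + 2) * p (l + 2) x + a (l + 1) * p (l + 1) x + b (l + 1) * p l x)
    (m n : ℕ) (hm : 1 ≤ m) (hmn : m ≤ n)
    -- associated polynomials p_l(x, m)
    (q : ℕ → ℝ → ℝ)
    (hq0 : ∀ x, q 0 x = 1)
    (hq1 : ∀ x, b (m + 1) * q 1 x = (x - a m) * q 0 x)
    (hqrec : ∀ l : ℕ, 1 ≤ l → ∀ x, b (m + l + 1) * q (l + 1) x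
      = (x - a (m + l)) * q l x - b (m + l) * q (l - 1) x)
    -- eigenvalue (root of the associated polynomial) and eigenfunction ψ
    (xs : ℝ) (hroot : q (n - m + 1) xs = 0)
    (κ : ℝ) (hκ : κ = (Real.sqrt (∑ l ∈ Finset.Icc m n, (q (l - m) xs) ^ 2))⁻¹)
    (ψ : ℝ → ℝ) (hψ : ∀ x, ψ x = κ * ∑ l ∈ Finset.Icc m n, q (l - m) xs * p l x) :
    dotProduct cvec ((Jm * Jm).mulVec cvec)
        - (dotProduct cvec (Jm.mulVec cvec)) ^ 2 = 0 ∧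
    (∫ x in (-1 : ℝ)..1, x ^ 2 * (ψ x) ^ 2 * w x) -
        (∫ x in (-1 : ℝ)..1, x * (ψ x) ^ 2 * w x) ^ 2 =
      ((b (n + 1)) ^ 2 * (q (n - m) xs) ^ 2 + (b m) ^ 2) /
        (∑ l ∈ Finset.range (n - m + 1), (q l xs) ^ 2) := by
  have AUXI := aux_int w a b hb p horth hint1 hrec0 hrec
  have AUXA := aux_A a b p hrec m hm q hq0 hq1 hqrec xs
  constructor
  · have h2 : (Jm * Jm).mulVec cvec = (lam ^ 2) • cvec := by
      rw [← Matrix.mulVec_mulVec, heig, Matrix.mulVec_smul, heig, smul_smul]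
      ring_nf
    rw [h2, heig, dotProduct_smul, dotProduct_smul, hcnorm]
    simp
  ·
    set S : ℝ := ∑ l ∈ Finset.range (n - m + 1), (q l xs) ^ 2 with hSdef
    have reindex : ∀ f : ℕ → ℝ, ∑ l ∈ Finset.Icc m n, f l
        = ∑ j ∈ Finset.range (n - m + 1), f (m + j) := by
      intro f
      rw [← Finset.Ico_add_one_right_eq_Icc, Finset.sum_Ico_eq_sum_range,
        show n + 1 - m = n - m + 1 from by omega]
    -- reindex
    have hSIcc : ∑ l ∈ Finset.Icc m n, (q (l - m) xs) ^ 2 = S := by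
      rw [hSdef, reindex]
      exact Finset.sum_congr rfl fun i _ => by rw [Nat.add_sub_cancel_left]
    have hS1 : (1 : ℝ) ≤ S := by
      have h0 : (0:ℕ) ∈ Finset.range (n - m + 1) := by simp
      have := Finset.single_le_sum (f := fun l => (q l xs) ^ 2)
        (fun i _ => sq_nonneg _) h0
      simpa [hq0] using this
    have hSpos : (0 : ℝ) < S := lt_of_lt_of_le one_pos hS1
    have hκ2 : κ ^ 2 = S⁻¹ := by
      rw [hκ, hSIcc, ← Real.sqrt_inv, Real.sq_sqrt (by positivity)]
    have hκ2S : κ ^ 2 * S = 1 := by rw [hκ2]; field_simp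
    -- ψ in range form
    have hψ' : ∀ x, ψ x = κ * ∑ j ∈ Finset.range (n - m + 1), q j xs * p (m + j) x := by
      intro x
      rw [hψ x, reindex]
      congr 1
      exact Finset.sum_congr rfl fun i _ => by rw [Nat.add_sub_cancel_left]
    -- key pointwise identity
    have Hψx : ∀ x : ℝ, x * ψ x = xs * ψ x + κ * b m * p (m - 1) x
        + κ * (b (n + 1) * q (n - m) xs) * p (n + 1) x := by
      intro x
      have hA := AUXA (n - m) x
      rw [hroot, show m + (n - m) + 1 = n + 1 from by omega,
        show m + (n - m) = n from by omega] at hA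
      have hswap : ∑ j ∈ Finset.range (n - m + 1), q j xs * (x * p (m + j) x)
          = x * ∑ j ∈ Finset.range (n - m + 1), q j xs * p (m + j) x := by
        rw [Finset.mul_sum]
        exact Finset.sum_congr rfl fun j _ => by ring
      rw [hswap] at hA
      rw [hψ' x]
      linear_combination κ * hA
    -- integrals of ψ * p j * w
    have heqψp : ∀ j : ℕ, (fun x => ψ x * p j x * w x)
        = fun x => ∑ l ∈ Finset.Icc m n, (κ * q (l - m) xs) * (p l x * p j x * w x) := by
      intro j
      funext x
      rw [hψ x, Finset.mul_sum, Finset.sum_mul, Finset.sum_mul]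
      exact Finset.sum_congr rfl fun l _ => by ring
    have hIψp : ∀ j : ℕ, IntervalIntegrable (fun x => ψ x * p j x * w x) volume (-1:ℝ) 1 := by
      intro j
      rw [heqψp j, show (fun x => ∑ l ∈ Finset.Icc m n, (κ * q (l - m) xs) * (p l x * p j x * w x))
          = ∑ l ∈ Finset.Icc m n, (fun x => (κ * q (l - m) xs) * (p l x * p j x * w x)) from by
        funext x; simp [Finset.sum_apply]]
      exact IntervalIntegrable.sum _ fun l _ => (AUXI l j).const_mul _
    have hVψp : ∀ j : ℕ, (∫ x in (-1:ℝ)..1, ψ x * p j x * w x)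
        = κ * (if j ∈ Finset.Icc m n then q (j - m) xs else 0) := by
      intro j
      rw [heqψp j, intervalIntegral.integral_finset_sum
        (fun l _ => (AUXI l j).const_mul _)]
      simp only [intervalIntegral.integral_const_mul, horth]
      rw [show (∑ l ∈ Finset.Icc m n, κ * q (l - m) xs * if l = j then (1:ℝ) else 0)
          = ∑ l ∈ Finset.Icc m n, if l = j then κ * q (l - m) xs else 0 from
        Finset.sum_congr rfl fun l _ => by split <;> simp]
      rw [Finset.sum_ite_eq' (Finset.Icc m n) j (fun l => κ * q (l - m) xs)]
      split <;> simp
    -- integral of ψ^2 * w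
    have heqψψ : (fun x => (ψ x)^2 * w x)
        = fun x => ∑ l ∈ Finset.Icc m n, (κ * q (l - m) xs) * (ψ x * p l x * w x) := by
      funext x
      rw [sq]
      nth_rewrite 2 [hψ x]
      rw [Finset.mul_sum, Finset.mul_sum, Finset.sum_mul]
      exact Finset.sum_congr rfl fun l _ => by ring
    have hIψψ : IntervalIntegrable (fun x => (ψ x)^2 * w x) volume (-1:ℝ) 1 := by
      rw [heqψψ, show (fun x => ∑ l ∈ Finset.Icc m n, (κ * q (l - m) xs) * (ψ x * p l x * w x))
          = ∑ l ∈ Finset.Icc m n, (fun x => (κ * q (l - m) xs) * (ψ x * p l x * w x)) from by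
        funext x; simp [Finset.sum_apply]]
      exact IntervalIntegrable.sum _ fun l _ => (hIψp l).const_mul _
    have hVψψ : (∫ x in (-1:ℝ)..1, (ψ x)^2 * w x) = 1 := by
      rw [heqψψ, intervalIntegral.integral_finset_sum (fun l _ => (hIψp l).const_mul _)]
      rw [show (∑ l ∈ Finset.Icc m n, ∫ x in (-1:ℝ)..1, κ * q (l - m) xs * (ψ x * p l x * w x))
          = ∑ l ∈ Finset.Icc m n, κ^2 * (q (l - m) xs)^2 from ?_]
      · rw [← Finset.mul_sum, hSIcc, hκ2S]
      · refine Finset.sum_congr rfl fun l hl => ?_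
        rw [intervalIntegral.integral_const_mul, hVψp l, if_pos hl]
        ring
    -- membership facts
    have hmem1 : (m - 1) ∉ Finset.Icc m n := by
      simp only [Finset.mem_Icc]; omega
    have hmem2 : (n + 1) ∉ Finset.Icc m n := by
      simp only [Finset.mem_Icc]; omega
    have hne12 : (m - 1) ≠ n + 1 := by omega
    have hVP : (∫ x in (-1:ℝ)..1, ψ x * p (m-1) x * w x) = 0 := by
      rw [hVψp, if_neg hmem1, mul_zero]
    have hVQ : (∫ x in (-1:ℝ)..1, ψ x * p (n+1) x * w x) = 0 := by
      rw [hVψp, if_neg hmem2, mul_zero]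
    have hVPP : (∫ x in (-1:ℝ)..1, p (m-1) x * p (m-1) x * w x) = 1 := by
      rw [horth]; simp
    have hVQQ : (∫ x in (-1:ℝ)..1, p (n+1) x * p (n+1) x * w x) = 1 := by
      rw [horth]; simp
    have hVPQ : (∫ x in (-1:ℝ)..1, p (m-1) x * p (n+1) x * w x) = 0 := by
      rw [horth, if_neg hne12]
    set B : ℝ := b (n + 1) * q (n - m) xs with hBdef
    -- first moment
    have hE1 : (∫ x in (-1:ℝ)..1, x * (ψ x)^2 * w x) = xs := by
      have heq : (fun x => x * (ψ x)^2 * w x)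
          = fun x => xs * ((ψ x)^2 * w x) + (κ * b m) * (ψ x * p (m-1) x * w x)
            + (κ * B) * (ψ x * p (n+1) x * w x) := by
        funext x
        linear_combination (ψ x * w x) * Hψx x
      rw [heq, intervalIntegral.integral_add ((hIψψ.const_mul xs).add
          ((hIψp (m-1)).const_mul (κ * b m))) ((hIψp (n+1)).const_mul (κ * B)),
        intervalIntegral.integral_add (hIψψ.const_mul xs) ((hIψp (m-1)).const_mul (κ * b m)),
        intervalIntegral.integral_const_mul, intervalIntegral.integral_const_mul,
        intervalIntegral.integral_const_mul, hVψψ, hVP, hVQ]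
      ring
    -- second moment
    have hE2 : (∫ x in (-1:ℝ)..1, x^2 * (ψ x)^2 * w x)
        = xs^2 + κ^2 * (b m)^2 + κ^2 * B^2 := by
      have heq : (fun x => x^2 * (ψ x)^2 * w x)
          = fun x => xs^2 * ((ψ x)^2 * w x) + (2*xs*κ*(b m)) * (ψ x * p (m-1) x * w x)
            + (2*xs*κ*B) * (ψ x * p (n+1) x * w x)
            + (κ*(b m))^2 * (p (m-1) x * p (m-1) x * w x)
            + (2*κ^2*(b m)*B) * (p (m-1) x * p (n+1) x * w x)
            + (κ*B)^2 * (p (n+1) x * p (n+1) x * w x) := by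
        funext x
        linear_combination (w x * (x * ψ x + xs * ψ x + κ * b m * p (m-1) x
          + κ * B * p (n+1) x)) * Hψx x
      have i0 := hIψψ.const_mul (xs^2)
      have i1 := (hIψp (m-1)).const_mul (2*xs*κ*(b m))
      have i2 := (hIψp (n+1)).const_mul (2*xs*κ*B)
      have i3 := (AUXI (m-1) (m-1)).const_mul ((κ*(b m))^2)
      have i4 := (AUXI (m-1) (n+1)).const_mul (2*κ^2*(b m)*B)
      have i5 := (AUXI (n+1) (n+1)).const_mul ((κ*B)^2)
      rw [heq,
        intervalIntegral.integral_add ((((i0.add i1).add i2).add i3).add i4) i5,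
        intervalIntegral.integral_add (((i0.add i1).add i2).add i3) i4,
        intervalIntegral.integral_add ((i0.add i1).add i2) i3,
        intervalIntegral.integral_add (i0.add i1) i2,
        intervalIntegral.integral_add i0 i1,
        intervalIntegral.integral_const_mul, intervalIntegral.integral_const_mul,
        intervalIntegral.integral_const_mul, intervalIntegral.integral_const_mul,
        intervalIntegral.integral_const_mul, intervalIntegral.integral_const_mul,
        hVψψ, hVP, hVQ, hVPP, hVPQ, hVQQ]
      ring
    rw [hE1, hE2, hκ2, hBdef]
    field_simp
    ring
end

section
/- Let f ∈ L²([-1,1], w dx) with ‖f‖_w = 1 and P_n^m f ≠ 0, and let x_max denote the largest eigenvalue of P_n^m M_x P_n^m. If x_max ≤ ε(f) < 1, then ‖P_n^m f‖_w² ≤ 1/2 + (1/2)(ε(f)·x_max + √(1−ε(f)²)·√(1−x_max²)). -/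
open MeasureTheory intervalIntegral

set_option maxHeartbeats 1000000

lemma sqrt_pair_le {x y : ℝ} (hx : 0 ≤ x) (hy : 0 ≤ y) (h : x^2 ≤ y^2) : x ≤ y := by
  nlinarith

lemma intervalIntegrable_sum' {ι : Type*} {s : Finset ι} {f : ι → ℝ → ℝ}
    {μ : MeasureTheory.Measure ℝ} {a b : ℝ}
    (h : ∀ i ∈ s, IntervalIntegrable (f i) μ a b) :
    IntervalIntegrable (fun x => ∑ i ∈ s, f i x) μ a b := by
  have heq : (fun x => ∑ i ∈ s, f i x) = ∑ i ∈ s, f i := by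
    funext x; simp
  rw [heq]; exact IntervalIntegrable.sum s h

lemma stmt14key (E xm t u : ℝ) (h1 : -1 ≤ xm) (h2 : xm ≤ E) (h3 : E < 1)
    (ht : 0 < t) (hu1 : -t ≤ u) (hu2 : u ≤ xm * t)
    (hmain : 2*t^2 ≤ t + E*u + Real.sqrt (1-E^2) * Real.sqrt (t^2-u^2)) :
    t ≤ 1 / 2 + 1 / 2 * (E * xm + Real.sqrt (1 - E ^ 2) * Real.sqrt (1 - xm ^ 2)) := by
  have hE1 : -1 ≤ E := le_trans h1 h2
  have hxm1 : xm ≤ 1 := le_trans h2 h3.le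
  set a := Real.sqrt (1 - E^2) with ha
  set b := Real.sqrt (1 - xm^2) with hb
  have ha0 : 0 ≤ a := Real.sqrt_nonneg _
  have hb0 : 0 ≤ b := Real.sqrt_nonneg _
  have ha2 : a^2 = 1 - E^2 := Real.sq_sqrt (by nlinarith)
  have hb2 : b^2 = 1 - xm^2 := Real.sq_sqrt (by nlinarith)
  have hut : u ≤ t := le_trans hu2 (by nlinarith)
  have htu2 : 0 ≤ t^2 - u^2 := by nlinarith
  set s := Real.sqrt (t^2 - u^2) with hs
  have hs0 : 0 ≤ s := Real.sqrt_nonneg _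
  have hs2 : s^2 = t^2 - u^2 := Real.sq_sqrt htu2
  have hA : a * xm ≤ E * b := by
    rcases le_or_gt 0 xm with hx | hx
    · have hE0 : 0 ≤ E := le_trans hx h2
      refine sqrt_pair_le (mul_nonneg ha0 hx) (mul_nonneg hE0 hb0) ?_
      have hd : (E*b)^2 - (a*xm)^2 = E^2 - xm^2 := by
        rw [mul_pow, mul_pow, ha2, hb2]; ring
      nlinarith
    · rcases le_or_gt 0 E with hE0 | hE0
      · exact le_trans (mul_nonpos_of_nonneg_of_nonpos ha0 hx.le) (mul_nonneg hE0 hb0)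
      · have h4 : (-E)*b ≤ a*(-xm) := by
          refine sqrt_pair_le (mul_nonneg (by linarith) hb0)
            (mul_nonneg ha0 (by linarith)) ?_
          have hd : (a*(-xm))^2 - ((-E)*b)^2 = xm^2 - E^2 := by
            rw [mul_pow, mul_pow, ha2, hb2]; ring
          nlinarith
        linarith
  have hB : 0 ≤ t * (E*xm + a*b) - E * u := by
    rcases le_or_gt 0 E with hE0 | hE0
    · have h4 : E * u ≤ E * (xm * t) := mul_le_mul_of_nonneg_left hu2 hE0
      have h5 : 0 ≤ t * (a*b) := mul_nonneg ht.le (mul_nonneg ha0 hb0)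
      nlinarith
    · have h4 : E * u ≤ E * (-t) := mul_le_mul_of_nonpos_left hu1 hE0.le
      have h6 : 0 ≤ 1 - xm - 2*E^2 := by
        nlinarith [mul_nonneg (show (0:ℝ) ≤ E+1 by linarith) (show (0:ℝ) ≤ 1-2*E by linarith)]
      have h7 : (-E)*(1+xm) ≤ a*b := by
        refine sqrt_pair_le (mul_nonneg (by linarith) (by linarith))
          (mul_nonneg ha0 hb0) ?_
        have hd : (a*b)^2 - ((-E)*(1+xm))^2 = (1+xm)*(1-xm-2*E^2) := by
          rw [mul_pow, mul_pow, ha2, hb2]; ring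
        have hprod : 0 ≤ (1+xm)*(1-xm-2*E^2) := mul_nonneg (by linarith) h6
        linarith
      nlinarith
  have hC : E*u + a*s ≤ t*(E*xm+a*b) := by
    have hEK : 0 ≤ E*(E*xm+a*b) - xm := by
      have hab : 0 ≤ a*(E*b - a*xm) := mul_nonneg ha0 (by linarith)
      nlinarith [ha2]
    have hfac : 0 ≤ (xm*t - u) * (2*E*(E*xm+a*b)*t - u - xm*t) := by
      apply mul_nonneg (by linarith)
      have h8 : 0 ≤ 2*t*(E*(E*xm+a*b) - xm) := mul_nonneg (by linarith) hEK
      nlinarith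
    have hid : (t*(E*xm+a*b) - E*u)^2 - (1-E^2)*(t^2-u^2)
        = (xm*t - u)*(2*E*(E*xm+a*b)*t - u - xm*t) := by
      linear_combination (t^2*a^2)*hb2 + (t^2*(1-xm^2))*ha2
    have has2 : (a*s)^2 = (1-E^2)*(t^2-u^2) := by
      linear_combination s^2*ha2 + (1-E^2)*hs2
    have hsq : (a*s)^2 ≤ (t*(E*xm+a*b) - E*u)^2 := by linarith
    have := sqrt_pair_le (mul_nonneg ha0 hs0) hB hsq
    linarith
  nlinarith [hmain, hC, ht, mul_pos ht ht]

/-- Simplified uncertainty inequality: for normalized `f` with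
`P_n^m f ≠ 0` and `x_max ≤ ε(f) < 1`,
`‖P_n^m f‖² ≤ 1/2 + (1/2)(ε(f)·x_max + √(1-ε(f)²)·√(1-x_max²))`. -/
theorem stmt14 (w : ℝ → ℝ) (hw : ∀ x ∈ Set.Icc (-1 : ℝ) 1, 0 < w x)
    (p : ℕ → ℝ → ℝ)
    (horth : ∀ k l : ℕ, ∫ x in (-1 : ℝ)..1, p k x * p l x * w x = if k = l then 1 else 0)
    (hintp : ∀ k l : ℕ,
      IntervalIntegrable (fun x => x * p k x * p l x * w x) volume (-1 : ℝ) 1)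
    (m n : ℕ) (hmn : m ≤ n)
    (f : ℝ → ℝ)
    (hintf : IntervalIntegrable (fun x => f x ^ 2 * w x) volume (-1 : ℝ) 1)
    (hintxf : IntervalIntegrable (fun x => x * f x ^ 2 * w x) volume (-1 : ℝ) 1)
    (hintfp : ∀ l : ℕ, IntervalIntegrable (fun x => f x * p l x * w x) volume (-1 : ℝ) 1)
    (hintxfp : ∀ l : ℕ,
      IntervalIntegrable (fun x => x * f x * p l x * w x) volume (-1 : ℝ) 1)
    (hnormf : ∫ x in (-1 : ℝ)..1, f x ^ 2 * w x = 1)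
    -- `P = P_n^m f ≠ 0`
    (P : ℝ → ℝ)
    (hP : ∀ x, P x =
      ∑ l ∈ Finset.Icc m n, (∫ y in (-1 : ℝ)..1, f y * p l y * w y) * p l x)
    (hPne : ∃ l ∈ Finset.Icc m n, (∫ y in (-1 : ℝ)..1, f y * p l y * w y) ≠ 0)
    -- `x_max` : largest eigenvalue of `P_n^m M_x P_n^m`
    (xmax : ℝ)
    (hxmaxmem : -1 ≤ xmax)
    (hmax : ∀ co : ℕ → ℝ,
      (∫ x in (-1 : ℝ)..1, x * (∑ l ∈ Finset.Icc m n, co l * p l x) ^ 2 * w x) ≤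
        xmax * ∫ x in (-1 : ℝ)..1, (∑ l ∈ Finset.Icc m n, co l * p l x) ^ 2 * w x)
    (E : ℝ) (hE : E = ∫ x in (-1 : ℝ)..1, x * f x ^ 2 * w x)
    (hEmax : xmax ≤ E) (hE1 : E < 1) :
    (∫ x in (-1 : ℝ)..1, P x ^ 2 * w x) ≤
      1 / 2 + (1 / 2) * (E * xmax + Real.sqrt (1 - E ^ 2) * Real.sqrt (1 - xmax ^ 2)) := by
  classical
  set c : ℕ → ℝ := fun l => ∫ y in (-1:ℝ)..1, f y * p l y * w y with hc
  have hP' : ∀ x, P x = ∑ l ∈ Finset.Icc m n, c l * p l x := hP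
  -- diagonal integrability
  have hppd : ∀ k, IntervalIntegrable (fun x => p k x * p k x * w x) volume (-1:ℝ) 1 := by
    intro k
    by_contra h
    have h0 := intervalIntegral.integral_undef h
    have h1 := horth k k
    rw [h0] at h1
    simp at h1
  have huIoc : Set.uIoc (-1:ℝ) 1 = Set.Ioc (-1:ℝ) 1 := Set.uIoc_of_le (by norm_num)
  have hw0 : ∀ x ∈ Set.uIoc (-1:ℝ) 1, 0 ≤ w x := by
    intro x hx
    rw [huIoc] at hx
    exact (hw x ⟨hx.1.le, hx.2⟩).le
  have hne0 : ∀ᵐ (x:ℝ) ∂(volume.restrict (Set.uIoc (-1:ℝ) 1)), x ≠ 0 := by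
    apply ae_restrict_of_ae
    rw [ae_iff]
    have hset : {a : ℝ | ¬a ≠ 0} = {0} := by ext y; simp
    rw [hset]
    exact measure_singleton 0
  have hpp : ∀ k l, IntervalIntegrable (fun x => p k x * p l x * w x) volume (-1:ℝ) 1 := by
    intro k l
    have hg : IntervalIntegrable
        (fun x => p k x * p k x * w x + p l x * p l x * w x) volume (-1:ℝ) 1 :=
      (hppd k).add (hppd l)
    apply hg.mono_fun
    · have h1 : AEStronglyMeasurable (fun x => x * p k x * p l x * w x)
          (volume.restrict (Set.uIoc (-1:ℝ) 1)) := by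
        rw [huIoc]; exact (hintp k l).1.aestronglyMeasurable
      have h2 : AEStronglyMeasurable (fun x => (x * p k x * p l x * w x) * x⁻¹)
          (volume.restrict (Set.uIoc (-1:ℝ) 1)) :=
        h1.mul (measurable_inv.aestronglyMeasurable)
      apply h2.congr
      filter_upwards [hne0] with x hx
      have : x * p k x * p l x * w x * x⁻¹ = (p k x * p l x * w x) * (x * x⁻¹) := by ring
      rw [this, mul_inv_cancel₀ hx, mul_one]
    · apply ae_restrict_of_forall_mem measurableSet_uIoc
      intro x hx
      have hwx := hw0 x hx
      simp only [Real.norm_eq_abs]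
      have habs : |p k x * p l x * w x| ≤ p k x * p k x * w x + p l x * p l x * w x := by
        rw [abs_mul, abs_of_nonneg hwx, abs_mul]
        have h1 : |p k x| * |p l x| ≤ p k x * p k x + p l x * p l x := by
          nlinarith [sq_nonneg (|p k x| - |p l x|), sq_abs (p k x), sq_abs (p l x),
            sq_nonneg (|p k x| + |p l x|)]
        nlinarith [mul_le_mul_of_nonneg_right h1 hwx, abs_nonneg (p k x), abs_nonneg (p l x)]
      exact le_trans habs (le_abs_self _)
  -- expansions of P
  have hPsq : ∀ x, P x ^ 2 * w x
      = ∑ k ∈ Finset.Icc m n, ∑ l ∈ Finset.Icc m n, c k * c l * (p k x * p l x * w x) := by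
    intro x
    rw [hP' x, sq, Finset.sum_mul_sum, Finset.sum_mul]
    refine Finset.sum_congr rfl fun k _ => ?_
    rw [Finset.sum_mul]
    exact Finset.sum_congr rfl fun l _ => by ring
  have hxPsq : ∀ x, x * P x ^ 2 * w x
      = ∑ k ∈ Finset.Icc m n, ∑ l ∈ Finset.Icc m n, c k * c l * (x * p k x * p l x * w x) := by
    intro x
    have h1 := hPsq x
    have h2 : x * P x ^ 2 * w x = x * (P x ^ 2 * w x) := by ring
    rw [h2, h1, Finset.mul_sum]
    refine Finset.sum_congr rfl fun k _ => ?_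
    rw [Finset.mul_sum]
    exact Finset.sum_congr rfl fun l _ => by ring
  have hPPint : IntervalIntegrable (fun x => P x ^ 2 * w x) volume (-1:ℝ) 1 := by
    have heq : (fun x => P x ^ 2 * w x) = fun x =>
        ∑ k ∈ Finset.Icc m n, ∑ l ∈ Finset.Icc m n, c k * c l * (p k x * p l x * w x) :=
      funext hPsq
    rw [heq]
    exact intervalIntegrable_sum' fun k _ =>
      intervalIntegrable_sum' fun l _ => (hpp k l).const_mul _
  have hxPPint : IntervalIntegrable (fun x => x * P x ^ 2 * w x) volume (-1:ℝ) 1 := by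
    have heq : (fun x => x * P x ^ 2 * w x) = fun x =>
        ∑ k ∈ Finset.Icc m n, ∑ l ∈ Finset.Icc m n, c k * c l * (x * p k x * p l x * w x) :=
      funext hxPsq
    rw [heq]
    exact intervalIntegrable_sum' fun k _ =>
      intervalIntegrable_sum' fun l _ => (hintp k l).const_mul _
  have hfPint : IntervalIntegrable (fun x => f x * P x * w x) volume (-1:ℝ) 1 := by
    have heq : (fun x => f x * P x * w x) = fun x =>
        ∑ l ∈ Finset.Icc m n, c l * (f x * p l x * w x) := by
      funext x
      rw [hP' x, Finset.mul_sum, Finset.sum_mul]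
      exact Finset.sum_congr rfl fun l _ => by ring
    rw [heq]
    exact intervalIntegrable_sum' fun l _ => (hintfp l).const_mul _
  have hxfPint : IntervalIntegrable (fun x => x * f x * P x * w x) volume (-1:ℝ) 1 := by
    have heq : (fun x => x * f x * P x * w x) = fun x =>
        ∑ l ∈ Finset.Icc m n, c l * (x * f x * p l x * w x) := by
      funext x
      rw [hP' x]
      rw [show x * f x * (∑ l ∈ Finset.Icc m n, c l * p l x) * w x
        = ∑ l ∈ Finset.Icc m n, (x * f x * (c l * p l x) * w x) by
          rw [Finset.mul_sum, Finset.sum_mul]]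
      exact Finset.sum_congr rfl fun l _ => by ring
    rw [heq]
    exact intervalIntegrable_sum' fun l _ => (hintxfp l).const_mul _
  -- values
  set S : ℝ := ∑ l ∈ Finset.Icc m n, c l ^ 2 with hSdef
  have htval : (∫ x in (-1:ℝ)..1, P x ^ 2 * w x) = S := by
    rw [intervalIntegral.integral_congr (g := fun x =>
      ∑ k ∈ Finset.Icc m n, ∑ l ∈ Finset.Icc m n, c k * c l * (p k x * p l x * w x))
      (fun x _ => hPsq x)]
    rw [intervalIntegral.integral_finset_sum (fun k _ =>
      intervalIntegrable_sum' fun l _ => (hpp k l).const_mul _)]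
    rw [hSdef]
    refine Finset.sum_congr rfl fun k hk => ?_
    rw [intervalIntegral.integral_finset_sum (fun l _ => (hpp k l).const_mul _)]
    have : ∀ l ∈ Finset.Icc m n,
        (∫ x in (-1:ℝ)..1, c k * c l * (p k x * p l x * w x))
        = c k * c l * (if k = l then 1 else 0) := fun l _ => by
      rw [intervalIntegral.integral_const_mul, horth]
    rw [Finset.sum_congr rfl this]
    simp [mul_ite, Finset.sum_ite_eq, hk, sq]
  have hSfP : (∫ x in (-1:ℝ)..1, f x * P x * w x) = S := by
    rw [intervalIntegral.integral_congr (g := fun x =>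
      ∑ l ∈ Finset.Icc m n, c l * (f x * p l x * w x))
      (fun x _ => by
        rw [hP' x, Finset.mul_sum, Finset.sum_mul]
        exact Finset.sum_congr rfl fun l _ => by ring)]
    rw [intervalIntegral.integral_finset_sum (fun l _ => (hintfp l).const_mul _)]
    rw [hSdef]
    refine Finset.sum_congr rfl fun l _ => ?_
    rw [intervalIntegral.integral_const_mul]
    simp only [hc]
    ring
  have hSpos : 0 < S := by
    obtain ⟨l0, hl0, hcl0⟩ := hPne
    have hc0 : c l0 ≠ 0 := hcl0
    have h1 : 0 < c l0 ^ 2 := lt_of_le_of_ne (sq_nonneg _) (Ne.symm (pow_ne_zero 2 hc0))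
    have h2 : c l0 ^ 2 ≤ S :=
      Finset.single_le_sum (f := fun l => c l ^ 2) (fun i _ => sq_nonneg _) hl0
    linarith
  -- u and hmax
  have hmc := hmax c
  have e1 : (fun x => x * (∑ l ∈ Finset.Icc m n, c l * p l x) ^ 2 * w x)
      = fun x => x * P x ^ 2 * w x := funext fun x => by rw [hP' x]
  have e2 : (fun x => (∑ l ∈ Finset.Icc m n, c l * p l x) ^ 2 * w x)
      = fun x => P x ^ 2 * w x := funext fun x => by rw [hP' x]
  rw [e1, e2] at hmc
  rw [htval] at hmc
  -- hmc : (∫ x*P²w) ≤ xmax * S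
  -- nonneg of (1∓x) integrals
  have hsplit1 : (∫ x in (-1:ℝ)..1, ((1:ℝ) - x) * P x ^ 2 * w x)
      = (∫ x in (-1:ℝ)..1, P x ^ 2 * w x) - ∫ x in (-1:ℝ)..1, x * P x ^ 2 * w x := by
    rw [intervalIntegral.integral_congr (g := fun x => P x ^ 2 * w x - x * P x ^ 2 * w x)
      (fun x _ => by ring)]
    exact intervalIntegral.integral_sub hPPint hxPPint
  have hsplit2 : (∫ x in (-1:ℝ)..1, ((1:ℝ) + x) * P x ^ 2 * w x)
      = (∫ x in (-1:ℝ)..1, P x ^ 2 * w x) + ∫ x in (-1:ℝ)..1, x * P x ^ 2 * w x := by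
    rw [intervalIntegral.integral_congr (g := fun x => P x ^ 2 * w x + x * P x ^ 2 * w x)
      (fun x _ => by ring)]
    exact intervalIntegral.integral_add hPPint hxPPint
  have hnn1 : 0 ≤ (∫ x in (-1:ℝ)..1, ((1:ℝ) - x) * P x ^ 2 * w x) :=
    intervalIntegral.integral_nonneg (by norm_num) (fun y hy =>
      mul_nonneg (mul_nonneg (by linarith [hy.2]) (sq_nonneg _)) (hw y hy).le)
  have hnn2 : 0 ≤ (∫ x in (-1:ℝ)..1, ((1:ℝ) + x) * P x ^ 2 * w x) :=
    intervalIntegral.integral_nonneg (by norm_num) (fun y hy =>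
      mul_nonneg (mul_nonneg (by linarith [hy.1]) (sq_nonneg _)) (hw y hy).le)
  set U : ℝ := ∫ x in (-1:ℝ)..1, x * P x ^ 2 * w x with hUdef
  set X : ℝ := ∫ x in (-1:ℝ)..1, x * f x * P x * w x with hXdef
  rw [htval] at hsplit1 hsplit2
  rw [hsplit1] at hnn1
  rw [hsplit2] at hnn2
  -- hnn1 : 0 ≤ S - U ; hnn2 : 0 ≤ S + U
  -- quadratic expansion
  have hexp : ∀ sg lam : ℝ,
      (∫ x in (-1:ℝ)..1, (1 - sg*x) * (f x - lam * P x)^2 * w x)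
      = (1 - sg*E) - 2*lam*(S - sg*X) + lam^2*(S - sg*U) := by
    intro sg lam
    have hi1 : IntervalIntegrable (fun x => f x ^ 2 * w x - sg*(x * f x ^ 2 * w x))
        volume (-1:ℝ) 1 := hintf.sub (hintxf.const_mul sg)
    have hi2 : IntervalIntegrable (fun x => f x * P x * w x - sg*(x * f x * P x * w x))
        volume (-1:ℝ) 1 := hfPint.sub (hxfPint.const_mul sg)
    have hi3 : IntervalIntegrable (fun x => P x ^ 2 * w x - sg*(x * P x ^ 2 * w x))
        volume (-1:ℝ) 1 := hPPint.sub (hxPPint.const_mul sg)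
    rw [intervalIntegral.integral_congr (g := fun x =>
        (f x ^ 2 * w x - sg*(x * f x ^ 2 * w x))
        - 2*lam*(f x * P x * w x - sg*(x * f x * P x * w x))
        + lam^2*(P x ^ 2 * w x - sg*(x * P x ^ 2 * w x))) (fun x _ => by ring)]
    rw [intervalIntegral.integral_add (hi1.sub (hi2.const_mul (2*lam))) (hi3.const_mul (lam^2))]
    rw [intervalIntegral.integral_sub hi1 (hi2.const_mul (2*lam))]
    simp only [intervalIntegral.integral_const_mul]
    rw [intervalIntegral.integral_sub hintf (hintxf.const_mul sg)]
    rw [intervalIntegral.integral_sub hfPint (hxfPint.const_mul sg)]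
    rw [intervalIntegral.integral_sub hPPint (hxPPint.const_mul sg)]
    simp only [intervalIntegral.integral_const_mul]
    rw [hnormf, ← hE, hSfP, ← hXdef, htval, ← hUdef]
    try ring
  have hquad : ∀ sg : ℝ, (sg = 1 ∨ sg = -1) →
      ∀ lam : ℝ, 0 ≤ (S - sg*U)*(lam*lam) + (-(2*(S - sg*X)))*lam + (1 - sg*E) := by
    intro sg hsg lam
    have h0 : 0 ≤ ∫ x in (-1:ℝ)..1, (1 - sg*x) * (f x - lam * P x)^2 * w x := by
      apply intervalIntegral.integral_nonneg (by norm_num)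
      intro y hy
      have h1 : 0 ≤ 1 - sg*y := by
        rcases hsg with h | h <;> rw [h] <;> [skip; skip] <;>
          [linarith [hy.2]; linarith [hy.1]]
      exact mul_nonneg (mul_nonneg h1 (sq_nonneg _)) (hw y hy).le
    rw [hexp sg lam] at h0
    nlinarith [h0]
  have hd1 := discrim_le_zero (hquad 1 (Or.inl rfl))
  have hd2 := discrim_le_zero (hquad (-1) (Or.inr rfl))
  rw [discrim] at hd1 hd2
  have hB1 : (S - X)^2 ≤ (1-E)*(S-U) := by nlinarith [hd1]
  have hB2 : (S + X)^2 ≤ (1+E)*(S+U) := by nlinarith [hd2]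
  have hE1' : (0:ℝ) ≤ 1 - E := by linarith
  have hE2' : (0:ℝ) ≤ 1 + E := by linarith
  have hA0 : 0 ≤ (1-E)*(S-U) := mul_nonneg hE1' hnn1
  have hB0 : 0 ≤ (1+E)*(S+U) := mul_nonneg hE2' hnn2
  have hs1 : S - X ≤ Real.sqrt ((1-E)*(S-U)) := by
    have h := Real.sqrt_le_sqrt hB1
    rw [Real.sqrt_sq_eq_abs] at h
    exact le_trans (le_abs_self _) h
  have hs2 : S + X ≤ Real.sqrt ((1+E)*(S+U)) := by
    have h := Real.sqrt_le_sqrt hB2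
    rw [Real.sqrt_sq_eq_abs] at h
    exact le_trans (le_abs_self _) h
  have hsum : 2*S ≤ Real.sqrt ((1-E)*(S-U)) + Real.sqrt ((1+E)*(S+U)) := by linarith
  have hsq : (2*S)^2 ≤ (Real.sqrt ((1-E)*(S-U)) + Real.sqrt ((1+E)*(S+U)))^2 :=
    pow_le_pow_left₀ (by linarith) hsum 2
  have hm : Real.sqrt ((1-E)*(S-U)) * Real.sqrt ((1+E)*(S+U))
      = Real.sqrt (1-E^2) * Real.sqrt (S^2-U^2) := by
    rw [← Real.sqrt_mul hA0, ← Real.sqrt_mul (by nlinarith : (0:ℝ) ≤ 1-E^2)]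
    congr 1; ring
  have hexp2 : (Real.sqrt ((1-E)*(S-U)) + Real.sqrt ((1+E)*(S+U)))^2
      = (1-E)*(S-U) + (1+E)*(S+U) + 2*(Real.sqrt (1-E^2) * Real.sqrt (S^2-U^2)) := by
    rw [show (Real.sqrt ((1-E)*(S-U)) + Real.sqrt ((1+E)*(S+U)))^2
      = Real.sqrt ((1-E)*(S-U))^2 + Real.sqrt ((1+E)*(S+U))^2
        + 2*(Real.sqrt ((1-E)*(S-U)) * Real.sqrt ((1+E)*(S+U))) from by ring]
    rw [Real.sq_sqrt hA0, Real.sq_sqrt hB0, hm]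
  have hmain : 2*S^2 ≤ S + E*U + Real.sqrt (1-E^2) * Real.sqrt (S^2-U^2) := by
    nlinarith [hsq, hexp2]
  rw [htval]
  exact stmt14key E xmax S U hxmaxmem hEmax hE1 hSpos (by linarith) hmc hmain
end

section
/- Let f ∈ L²([-1,1], w dx) with ‖f‖_w = 1 and P_n^m f ≠ 0, let V = var(f), E = ε(f), and suppose x_max ≤ E < 1 where x_max is the largest eigenvalue of P_n^m M_x P_n^m. Then ‖P_n^m f‖_w ≤ [ (E+1)^{3/2} (x_max+1)^{1/2} + V^{1/2} (V + (1+E)(E−x_max))^{1/2} ] / (V + (E+1)²). -/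
open MeasureTheory intervalIntegral

lemma key_alg (U c V' t s : ℝ) (hU : 0 < U) (hc : 0 ≤ c) (hcU : c ≤ U) (hV : 0 ≤ V')
    (ht : 0 ≤ t) (hs : 0 ≤ s) (hts : t ^ 2 + s ^ 2 = 1) (hcon : U * t - V' * s ≤ c) :
    (U ^ 2 + V' ^ 2) * t ≤ U * c + V' * Real.sqrt (U ^ 2 + V' ^ 2 - c ^ 2) := by
  set W := Real.sqrt (U ^ 2 + V' ^ 2 - c ^ 2) with hWdef
  have hW2 : W ^ 2 = U ^ 2 + V' ^ 2 - c ^ 2 := Real.sq_sqrt (by nlinarith)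
  have hW : 0 ≤ W := Real.sqrt_nonneg _
  rcases le_or_gt ((U ^ 2 + V' ^ 2) * t - U * c) 0 with h0 | h0
  · nlinarith [mul_nonneg hV hW]
  have hsq : ((U ^ 2 + V' ^ 2) * t - U * c) ^ 2 ≤ (V' * W) ^ 2 := by
    rcases le_or_gt (U * t - c) 0 with h1 | h1
    · -- t <= c/U
      have htc : U * t ≤ c := by linarith
      have hA : U * ((U ^ 2 + V' ^ 2) * t - U * c) ≤ c * V' ^ 2 := by nlinarith
      have hB : (c * V' ^ 2) ^ 2 ≤ U ^ 2 * (V' * W) ^ 2 := by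
        rw [mul_pow V' W, hW2]; nlinarith [mul_nonneg (mul_nonneg (by nlinarith : (0:ℝ) ≤ U ^ 2 - c ^ 2) (by positivity : (0:ℝ) ≤ U ^ 2 + V' ^ 2)) (sq_nonneg V')]
      have hC : (U * ((U ^ 2 + V' ^ 2) * t - U * c)) ^ 2 ≤ (c * V' ^ 2) ^ 2 := by
        nlinarith [mul_pos hU h0]
      have := mul_pos hU hU
      nlinarith [hC, hB]
    · have h2 : (U * t - c) ^ 2 ≤ V' ^ 2 * (1 - t ^ 2) := by
        have : U * t - c ≤ V' * s := by linarith
        nlinarith [mul_nonneg hV hs]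
      have hid : (V' * W) ^ 2 - ((U ^ 2 + V' ^ 2) * t - U * c) ^ 2 =
          (U ^ 2 + V' ^ 2) * (V' ^ 2 * (1 - t ^ 2) - (U * t - c) ^ 2) := by
        rw [mul_pow V' W, hW2]; ring
      nlinarith [mul_nonneg (by positivity : (0:ℝ) ≤ U ^ 2 + V' ^ 2) (by linarith : (0:ℝ) ≤ V' ^ 2 * (1 - t ^ 2) - (U * t - c) ^ 2)]
  nlinarith [mul_nonneg hV hW]

lemma cs_discrim (A B C : ℝ) (h : ∀ lam : ℝ, 0 ≤ C * lam ^ 2 + 2 * B * lam + A) :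
    B ^ 2 ≤ A * C := by
  have hd := discrim_le_zero (a := C) (b := 2 * B) (c := A) (fun x => by nlinarith [h x])
  rw [discrim] at hd; nlinarith

lemma intInt_of_ne (F : ℝ → ℝ) (h : (∫ x in (-1:ℝ)..1, F x) ≠ 0) :
    IntervalIntegrable F volume (-1:ℝ) 1 := by
  by_contra hc
  exact h (intervalIntegral.integral_undef hc)

lemma intInt_sum {ι : Type*} (s : Finset ι) (F : ι → ℝ → ℝ)
    (h : ∀ i ∈ s, IntervalIntegrable (F i) volume (-1:ℝ) 1) :
    IntervalIntegrable (fun x => ∑ i ∈ s, F i x) volume (-1:ℝ) 1 := by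
  have := IntervalIntegrable.sum s h
  simpa [Finset.sum_fn] using this

lemma prod_intInt (g1 g2 w : ℝ → ℝ)
    (h11 : IntervalIntegrable (fun x => g1 x * g1 x * w x) volume (-1:ℝ) 1)
    (h22 : IntervalIntegrable (fun x => g2 x * g2 x * w x) volume (-1:ℝ) 1)
    (hx : IntervalIntegrable (fun x => x * g1 x * g2 x * w x) volume (-1:ℝ) 1)
    (hw : ∀ x ∈ Set.Icc (-1:ℝ) 1, 0 ≤ w x) :
    IntervalIntegrable (fun x => g1 x * g2 x * w x) volume (-1:ℝ) 1 := by
  have hmeas : AEStronglyMeasurable (fun x => g1 x * g2 x * w x)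
      (volume.restrict (Set.uIoc (-1:ℝ) 1)) := by
    have h1 : AEStronglyMeasurable (fun x => x * g1 x * g2 x * w x)
        (volume.restrict (Set.uIoc (-1:ℝ) 1)) := by
      rw [Set.uIoc_of_le (by norm_num : (-1:ℝ) ≤ 1)]
      exact hx.1.aestronglyMeasurable
    have h2 : AEStronglyMeasurable (fun x => x⁻¹ * (x * g1 x * g2 x * w x))
        (volume.restrict (Set.uIoc (-1:ℝ) 1)) :=
      (measurable_inv.comp measurable_id).aestronglyMeasurable.mul h1
    apply h2.congr
    have h0 : ∀ᵐ x ∂(volume.restrict (Set.uIoc (-1:ℝ) 1)), x ≠ 0 := by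
      apply ae_restrict_of_ae
      rw [MeasureTheory.ae_iff]
      have : {x : ℝ | ¬x ≠ 0} = {0} := by ext y; simp
      rw [this]
      exact Real.volume_singleton
    filter_upwards [h0] with x hx0
    field_simp
  apply IntervalIntegrable.mono_fun (h11.add h22) hmeas
  have hmem : ∀ᵐ x ∂(volume.restrict (Set.uIoc (-1:ℝ) 1)), x ∈ Set.uIoc (-1:ℝ) 1 :=
    ae_restrict_mem measurableSet_uIoc
  filter_upwards [hmem] with x hx0
  have hxI : x ∈ Set.Icc (-1:ℝ) 1 := by
    rw [Set.uIoc_of_le (by norm_num : (-1:ℝ) ≤ 1)] at hx0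
    exact ⟨le_of_lt hx0.1, hx0.2⟩
  have hw0 := hw x hxI
  simp only [Real.norm_eq_abs]
  have h1 : |g1 x * g2 x * w x| ≤ (g1 x * g1 x + g2 x * g2 x) * w x := by
    rw [abs_mul, abs_of_nonneg hw0]
    apply mul_le_mul_of_nonneg_right _ hw0
    rw [abs_mul]
    nlinarith [sq_nonneg (|g1 x| - |g2 x|), abs_nonneg (g1 x), abs_nonneg (g2 x),
      sq_abs (g1 x), sq_abs (g2 x)]
  calc |g1 x * g2 x * w x| ≤ (g1 x * g1 x + g2 x * g2 x) * w x := h1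
    _ ≤ |g1 x * g1 x * w x + g2 x * g2 x * w x| := by
        rw [← add_mul]; exact le_abs_self _

lemma Epos (f w : ℝ → ℝ) (hw : ∀ x ∈ Set.Icc (-1:ℝ) 1, 0 < w x)
    (hintf : IntervalIntegrable (fun x => f x ^ 2 * w x) volume (-1:ℝ) 1)
    (hintxf : IntervalIntegrable (fun x => x * f x ^ 2 * w x) volume (-1:ℝ) 1)
    (hnormf : ∫ x in (-1:ℝ)..1, f x ^ 2 * w x = 1)
    (E : ℝ) (hE : E = ∫ x in (-1:ℝ)..1, x * f x ^ 2 * w x) :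
    0 < E + 1 := by
  set A : ℝ → ℝ := fun x => x * f x ^ 2 * w x + f x ^ 2 * w x with hA
  have hAint : IntervalIntegrable A volume (-1:ℝ) 1 := hintxf.add hintf
  have hAval : ∫ x in (-1:ℝ)..1, A x = E + 1 := by
    rw [hA, intervalIntegral.integral_add hintxf hintf, ← hE, hnormf]
  have hAnn : ∀ x ∈ Set.Icc (-1:ℝ) 1, 0 ≤ A x := by
    intro x hx
    have : A x = (x + 1) * (f x ^ 2 * w x) := by rw [hA]; ring
    rw [this]
    exact mul_nonneg (by linarith [hx.1]) (mul_nonneg (sq_nonneg _) (le_of_lt (hw x hx)))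
  have hEnn : 0 ≤ E + 1 := by
    rw [← hAval]
    apply intervalIntegral.integral_nonneg (by norm_num) hAnn
  rcases lt_or_eq_of_le hEnn with h | h
  · exact h
  exfalso
  have hAzero : A =ᵐ[volume.restrict (Set.Ioc (-1:ℝ) 1)] 0 := by
    rw [← intervalIntegral.integral_eq_zero_iff_of_le_of_nonneg_ae (by norm_num) ?_ hAint]
    · rw [hAval, ← h]
    · have hmem : ∀ᵐ x ∂(volume.restrict (Set.Ioc (-1:ℝ) 1)), x ∈ Set.Ioc (-1:ℝ) 1 :=
        ae_restrict_mem measurableSet_Ioc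
      filter_upwards [hmem] with x hx0
      exact hAnn x ⟨le_of_lt hx0.1, hx0.2⟩
  have hfzero : (fun x => f x ^ 2 * w x) =ᵐ[volume.restrict (Set.Ioc (-1:ℝ) 1)] 0 := by
    have hmem : ∀ᵐ x ∂(volume.restrict (Set.Ioc (-1:ℝ) 1)), x ∈ Set.Ioc (-1:ℝ) 1 :=
      ae_restrict_mem measurableSet_Ioc
    filter_upwards [hAzero, hmem] with x hx1 hx2
    simp only [Pi.zero_apply] at hx1 ⊢
    have hx3 : A x = (x + 1) * (f x ^ 2 * w x) := by rw [hA]; ring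
    have hx4 : (0:ℝ) < x + 1 := by linarith [hx2.1]
    rw [hx3] at hx1
    exact (mul_eq_zero.mp hx1).resolve_left (ne_of_gt hx4)
  have : ∫ x in (-1:ℝ)..1, f x ^ 2 * w x = 0 := by
    rw [intervalIntegral.integral_of_le (by norm_num : (-1:ℝ) ≤ 1)]
    rw [MeasureTheory.integral_congr_ae hfzero]
    simp
  rw [hnormf] at this
  exact one_ne_zero this

lemma final_step (E V xmax a2 K X : ℝ) (hU : 0 < E + 1) (hxm1 : (0:ℝ) ≤ xmax + 1)
    (hVnn : 0 ≤ V) (hEmax : xmax ≤ E) (ha2pos : 0 < a2) (ha2le1 : a2 ≤ 1)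
    (hXbound : X ≤ xmax * a2) (hCS1 : (K + a2) ^ 2 ≤ (E + 1) * (X + a2))
    (hCS2 : (K - E * a2) ^ 2 ≤ V * (a2 - a2 * a2)) :
    Real.sqrt a2 ≤
      (Real.sqrt ((E + 1) ^ 3) * Real.sqrt (xmax + 1) +
        Real.sqrt V * Real.sqrt (V + (1 + E) * (E - xmax))) / (V + (E + 1) ^ 2) := by
  set t : ℝ := Real.sqrt a2 with htdef
  set s : ℝ := Real.sqrt (1 - a2) with hsdef
  set c : ℝ := Real.sqrt ((E + 1) * (xmax + 1)) with hcdef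
  set V' : ℝ := Real.sqrt V with hVdef
  have ht2 : t ^ 2 = a2 := Real.sq_sqrt ha2pos.le
  have hs2 : s ^ 2 = 1 - a2 := Real.sq_sqrt (by linarith)
  have hc2 : c ^ 2 = (E + 1) * (xmax + 1) := Real.sq_sqrt (mul_nonneg hU.le hxm1)
  have hV2 : V' ^ 2 = V := Real.sq_sqrt hVnn
  have htnn : 0 ≤ t := Real.sqrt_nonneg _
  have hsnn : 0 ≤ s := Real.sqrt_nonneg _
  have hcnn : 0 ≤ c := Real.sqrt_nonneg _
  have hVpnn : 0 ≤ V' := Real.sqrt_nonneg _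
  have htpos : 0 < t := Real.sqrt_pos.mpr ha2pos
  have hts : t ^ 2 + s ^ 2 = 1 := by rw [ht2, hs2]; ring
  have hstepA : K + a2 ≤ c * t := by
    have h1 : X + a2 ≤ (xmax + 1) * a2 := by nlinarith
    have h2 : (K + a2) ^ 2 ≤ (c * t) ^ 2 := by
      have h3 : (c * t) ^ 2 = (E + 1) * ((xmax + 1) * a2) := by
        rw [mul_pow, hc2, ht2]; ring
      rw [h3]
      calc (K + a2) ^ 2 ≤ (E + 1) * (X + a2) := hCS1
        _ ≤ (E + 1) * ((xmax + 1) * a2) := mul_le_mul_of_nonneg_left h1 hU.le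
    nlinarith [mul_nonneg hcnn htnn]
  have hstepB : -(V' * (t * s)) ≤ K - E * a2 := by
    have h1 : (K - E * a2) ^ 2 ≤ (V' * (t * s)) ^ 2 := by
      have h3 : (V' * (t * s)) ^ 2 = V * (a2 - a2 * a2) := by
        rw [mul_pow, mul_pow, hV2, ht2, hs2]; ring
      rw [h3]; exact hCS2
    nlinarith [mul_nonneg hVpnn (mul_nonneg htnn hsnn)]
  have hconstr : (E + 1) * t - V' * s ≤ c := by
    have h1 : (E + 1) * a2 - V' * (t * s) ≤ c * t := by linarith
    have h2 : t * ((E + 1) * t - V' * s - c) ≤ 0 := by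
      have h2a : t * ((E + 1) * t - V' * s - c) = (E + 1) * t ^ 2 - V' * (t * s) - c * t := by
        ring
      rw [h2a, ht2]; linarith
    by_contra hcon
    push_neg at hcon
    have h4 : 0 < (E + 1) * t - V' * s - c := by linarith
    have h5 := mul_pos htpos h4
    linarith
  have hcU : c ≤ E + 1 := by nlinarith
  have hkey := key_alg (E + 1) c V' t s hU hcnn hcU hVpnn htnn hsnn hts hconstr
  have hDpos : 0 < V + (E + 1) ^ 2 := by positivity
  rw [le_div_iff₀ hDpos]
  have hnum1 : Real.sqrt ((E + 1) ^ 3) * Real.sqrt (xmax + 1) = (E + 1) * c := by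
    rw [show (E + 1) ^ 3 = (E + 1) ^ 2 * (E + 1) by ring,
      Real.sqrt_mul (sq_nonneg _), Real.sqrt_sq hU.le, hcdef,
      Real.sqrt_mul hU.le]
    ring
  have hnum2 : Real.sqrt (V + (1 + E) * (E - xmax))
      = Real.sqrt ((E + 1) ^ 2 + V' ^ 2 - c ^ 2) := by
    congr 1
    rw [hV2, hc2]; ring
  rw [hnum1, hnum2]
  calc t * (V + (E + 1) ^ 2) = ((E + 1) ^ 2 + V' ^ 2) * t := by rw [hV2]; ring
    _ ≤ (E + 1) * c + V' * Real.sqrt ((E + 1) ^ 2 + V' ^ 2 - c ^ 2) := hkey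


/-- Sharp uncertainty inequality (5.1): for normalized `f` with
`P_n^m f ≠ 0`, `V = var(f)`, `E = ε(f)` and `x_max ≤ E < 1`,
`‖P_n^m f‖ ≤ [(E+1)^{3/2}(x_max+1)^{1/2} + V^{1/2}(V+(1+E)(E-x_max))^{1/2}]/(V+(E+1)²)`. -/
theorem stmt15 (w : ℝ → ℝ) (hw : ∀ x ∈ Set.Icc (-1 : ℝ) 1, 0 < w x)
    (p : ℕ → ℝ → ℝ)
    (horth : ∀ k l : ℕ, ∫ x in (-1 : ℝ)..1, p k x * p l x * w x = if k = l then 1 else 0)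
    (hintp : ∀ k l : ℕ,
      IntervalIntegrable (fun x => x * p k x * p l x * w x) volume (-1 : ℝ) 1)
    (m n : ℕ) (hmn : m ≤ n)
    (f : ℝ → ℝ)
    (hintf : IntervalIntegrable (fun x => f x ^ 2 * w x) volume (-1 : ℝ) 1)
    (hintxf : IntervalIntegrable (fun x => x * f x ^ 2 * w x) volume (-1 : ℝ) 1)
    (hintxxf : IntervalIntegrable (fun x => x ^ 2 * f x ^ 2 * w x) volume (-1 : ℝ) 1)
    (hintfp : ∀ l : ℕ, IntervalIntegrable (fun x => f x * p l x * w x) volume (-1 : ℝ) 1)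
    (hintxfp : ∀ l : ℕ,
      IntervalIntegrable (fun x => x * f x * p l x * w x) volume (-1 : ℝ) 1)
    (hnormf : ∫ x in (-1 : ℝ)..1, f x ^ 2 * w x = 1)
    -- `P = P_n^m f ≠ 0`
    (P : ℝ → ℝ)
    (hP : ∀ x, P x =
      ∑ l ∈ Finset.Icc m n, (∫ y in (-1 : ℝ)..1, f y * p l y * w y) * p l x)
    (hPne : ∃ l ∈ Finset.Icc m n, (∫ y in (-1 : ℝ)..1, f y * p l y * w y) ≠ 0)
    -- `x_max` : largest eigenvalue of `P_n^m M_x P_n^m`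
    (xmax : ℝ)
    (hxmaxmem : -1 ≤ xmax)
    (hmax : ∀ co : ℕ → ℝ,
      (∫ x in (-1 : ℝ)..1, x * (∑ l ∈ Finset.Icc m n, co l * p l x) ^ 2 * w x) ≤
        xmax * ∫ x in (-1 : ℝ)..1, (∑ l ∈ Finset.Icc m n, co l * p l x) ^ 2 * w x)
    (E : ℝ) (hE : E = ∫ x in (-1 : ℝ)..1, x * f x ^ 2 * w x)
    (V : ℝ) (hV : V = (∫ x in (-1 : ℝ)..1, x ^ 2 * f x ^ 2 * w x) - E ^ 2)
    (hEmax : xmax ≤ E) (hE1 : E < 1) :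
    Real.sqrt (∫ x in (-1 : ℝ)..1, P x ^ 2 * w x) ≤
      (Real.sqrt ((E + 1) ^ 3) * Real.sqrt (xmax + 1) +
        Real.sqrt V * Real.sqrt (V + (1 + E) * (E - xmax))) / (V + (E + 1) ^ 2) := by
  have hwnn : ∀ x ∈ Set.Icc (-1:ℝ) 1, 0 ≤ w x := fun x hx => (hw x hx).le
  set S := Finset.Icc m n with hS
  set co : ℕ → ℝ := fun l => ∫ y in (-1:ℝ)..1, f y * p l y * w y with hco
  -- basic integrabilities
  have hpll : ∀ l, IntervalIntegrable (fun x => p l x * p l x * w x) volume (-1:ℝ) 1 := by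
    intro l
    apply intInt_of_ne
    rw [horth l l]
    simp
  have hpkl : ∀ k l, IntervalIntegrable (fun x => p k x * p l x * w x) volume (-1:ℝ) 1 :=
    fun k l => prod_intInt _ _ _ (hpll k) (hpll l) (hintp k l) hwnn
  -- expansions of integrands
  have hP2eq : (fun x => P x ^ 2 * w x) =
      fun x => ∑ k ∈ S, ∑ l ∈ S, (co k * co l) * (p k x * p l x * w x) := by
    funext x
    rw [hP x, sq, Finset.sum_mul_sum, Finset.sum_mul]
    refine Finset.sum_congr rfl fun k _ => ?_
    rw [Finset.sum_mul]
    exact Finset.sum_congr rfl fun l _ => by ring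
  have hxP2eq : (fun x => x * P x ^ 2 * w x) =
      fun x => ∑ k ∈ S, ∑ l ∈ S, (co k * co l) * (x * p k x * p l x * w x) := by
    funext x
    rw [hP x, sq]
    rw [show x * ((∑ l ∈ S, co l * p l x) * (∑ l ∈ S, co l * p l x)) * w x
      = ((∑ l ∈ S, co l * p l x) * (∑ l ∈ S, co l * p l x)) * (x * w x) by ring]
    rw [Finset.sum_mul_sum, Finset.sum_mul]
    refine Finset.sum_congr rfl fun k _ => ?_
    rw [Finset.sum_mul]
    exact Finset.sum_congr rfl fun l _ => by ring
  have hfPeq : (fun x => f x * P x * w x) =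
      fun x => ∑ l ∈ S, co l * (f x * p l x * w x) := by
    funext x
    rw [hP x, Finset.mul_sum, Finset.sum_mul]
    exact Finset.sum_congr rfl fun l _ => by ring
  have hxfPeq : (fun x => x * f x * P x * w x) =
      fun x => ∑ l ∈ S, co l * (x * f x * p l x * w x) := by
    funext x
    rw [hP x, Finset.mul_sum, Finset.sum_mul]
    exact Finset.sum_congr rfl fun l _ => by ring
  -- integrability of P-expressions
  have hintP2 : IntervalIntegrable (fun x => P x ^ 2 * w x) volume (-1:ℝ) 1 := by
    rw [hP2eq]
    exact intInt_sum S _ fun k _ => intInt_sum S _ fun l _ => (hpkl k l).const_mul _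
  have hintxP2 : IntervalIntegrable (fun x => x * P x ^ 2 * w x) volume (-1:ℝ) 1 := by
    rw [hxP2eq]
    exact intInt_sum S _ fun k _ => intInt_sum S _ fun l _ => (hintp k l).const_mul _
  have hintfP : IntervalIntegrable (fun x => f x * P x * w x) volume (-1:ℝ) 1 := by
    rw [hfPeq]
    exact intInt_sum S _ fun l _ => (hintfp l).const_mul _
  have hintxfP : IntervalIntegrable (fun x => x * f x * P x * w x) volume (-1:ℝ) 1 := by
    rw [hxfPeq]
    exact intInt_sum S _ fun l _ => (hintxfp l).const_mul _
  -- values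
  set a2 : ℝ := ∑ l ∈ S, co l * co l with ha2
  have hfPval : ∫ x in (-1:ℝ)..1, f x * P x * w x = a2 := by
    rw [hfPeq, intervalIntegral.integral_finset_sum (fun l _ => (hintfp l).const_mul _)]
    exact Finset.sum_congr rfl fun l _ => by
      rw [intervalIntegral.integral_const_mul]
  have hP2val : ∫ x in (-1:ℝ)..1, P x ^ 2 * w x = a2 := by
    rw [hP2eq, intervalIntegral.integral_finset_sum
      (fun k _ => intInt_sum S _ fun l _ => (hpkl k l).const_mul _)]
    refine Finset.sum_congr rfl fun k hk => ?_
    rw [intervalIntegral.integral_finset_sum (fun l _ => (hpkl k l).const_mul _)]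
    rw [Finset.sum_eq_single_of_mem k hk]
    · rw [intervalIntegral.integral_const_mul, horth k k]
      simp
    · intro l _ hlk
      rw [intervalIntegral.integral_const_mul, horth k l, if_neg (fun h => hlk h.symm)]
      ring
  -- positivity facts
  have ha2pos : 0 < a2 := by
    obtain ⟨l0, hl0S, hl0⟩ := hPne
    have h1 : co l0 * co l0 ≤ a2 :=
      Finset.single_le_sum (f := fun l => co l * co l)
        (fun i _ => mul_self_nonneg _) hl0S
    have h2 : 0 < co l0 * co l0 := mul_self_pos.mpr hl0
    linarith
  have ha2le1 : a2 ≤ 1 := by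
    have hnn : 0 ≤ ∫ x in (-1:ℝ)..1,
        (f x ^ 2 * w x + ((-2) * (f x * P x * w x) + P x ^ 2 * w x)) := by
      apply intervalIntegral.integral_nonneg (by norm_num)
      intro x hx
      have : f x ^ 2 * w x + ((-2) * (f x * P x * w x) + P x ^ 2 * w x)
          = (f x - P x) ^ 2 * w x := by ring
      rw [this]
      exact mul_nonneg (sq_nonneg _) (hwnn x hx)
    rw [intervalIntegral.integral_add hintf ((hintfP.const_mul _).add hintP2),
      intervalIntegral.integral_add (hintfP.const_mul _) hintP2,
      intervalIntegral.integral_const_mul, hnormf, hfPval, hP2val] at hnn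
    linarith
  have hU : 0 < E + 1 := Epos f w hw hintf hintxf hnormf E hE
  have hxm1 : (0:ℝ) ≤ xmax + 1 := by linarith
  -- V = ∫ (x-E)^2 f^2 w  ≥ 0
  have hI3 : ∫ x in (-1:ℝ)..1, x ^ 2 * f x ^ 2 * w x = V + E ^ 2 := by
    rw [hV]; ring
  have hVnn : 0 ≤ V := by
    have hnn : 0 ≤ ∫ x in (-1:ℝ)..1,
        (x ^ 2 * f x ^ 2 * w x + ((-(2 * E)) * (x * f x ^ 2 * w x)
          + E ^ 2 * (f x ^ 2 * w x))) := by
      apply intervalIntegral.integral_nonneg (by norm_num)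
      intro x hx
      have : x ^ 2 * f x ^ 2 * w x + ((-(2 * E)) * (x * f x ^ 2 * w x)
          + E ^ 2 * (f x ^ 2 * w x)) = ((x - E) * f x) ^ 2 * w x := by ring
      rw [this]
      exact mul_nonneg (sq_nonneg _) (hwnn x hx)
    rw [intervalIntegral.integral_add hintxxf ((hintxf.const_mul _).add (hintf.const_mul _)),
      intervalIntegral.integral_add (hintxf.const_mul _) (hintf.const_mul _),
      intervalIntegral.integral_const_mul, intervalIntegral.integral_const_mul,
      hI3, ← hE, hnormf] at hnn
    nlinarith
  -- hmax applied to our coefficients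
  set X : ℝ := ∫ x in (-1:ℝ)..1, x * P x ^ 2 * w x with hX
  have hXbound : X ≤ xmax * a2 := by
    have h := hmax co
    have e1 : (∫ x in (-1:ℝ)..1, x * (∑ l ∈ S, co l * p l x) ^ 2 * w x)
        = ∫ x in (-1:ℝ)..1, x * P x ^ 2 * w x :=
      intervalIntegral.integral_congr (fun x _ => by rw [hP x])
    have e2 : (∫ x in (-1:ℝ)..1, (∑ l ∈ S, co l * p l x) ^ 2 * w x)
        = ∫ x in (-1:ℝ)..1, P x ^ 2 * w x :=
      intervalIntegral.integral_congr (fun x _ => by rw [hP x])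
    rw [e1, e2, hP2val] at h
    exact h
  set K : ℝ := ∫ x in (-1:ℝ)..1, x * f x * P x * w x with hK
  -- Cauchy-Schwarz 1 : (K + a2)^2 ≤ (E+1) * (X + a2)
  have hCS1 : (K + a2) ^ 2 ≤ (E + 1) * (X + a2) := by
    apply cs_discrim
    intro lam
    have hnn : 0 ≤ ∫ x in (-1:ℝ)..1,
        ((x * f x ^ 2 * w x + f x ^ 2 * w x)
          + ((2 * lam) * (x * f x * P x * w x + f x * P x * w x)
            + lam ^ 2 * (x * P x ^ 2 * w x + P x ^ 2 * w x))) := by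
      apply intervalIntegral.integral_nonneg (by norm_num)
      intro x hx
      have : (x * f x ^ 2 * w x + f x ^ 2 * w x)
          + ((2 * lam) * (x * f x * P x * w x + f x * P x * w x)
            + lam ^ 2 * (x * P x ^ 2 * w x + P x ^ 2 * w x))
          = (x + 1) * ((f x + lam * P x) ^ 2 * w x) := by ring
      rw [this]
      exact mul_nonneg (by linarith [hx.1]) (mul_nonneg (sq_nonneg _) (hwnn x hx))
    have hG2 : IntervalIntegrable (fun x => x * f x * P x * w x + f x * P x * w x)
        volume (-1:ℝ) 1 := hintxfP.add hintfP
    have hG3 : IntervalIntegrable (fun x => x * P x ^ 2 * w x + P x ^ 2 * w x)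
        volume (-1:ℝ) 1 := hintxP2.add hintP2
    rw [intervalIntegral.integral_add (hintxf.add hintf)
        ((hG2.const_mul _).add (hG3.const_mul _)),
      intervalIntegral.integral_add (hG2.const_mul _) (hG3.const_mul _),
      intervalIntegral.integral_const_mul, intervalIntegral.integral_const_mul,
      intervalIntegral.integral_add hintxf hintf,
      intervalIntegral.integral_add hintxfP hintfP,
      intervalIntegral.integral_add hintxP2 hintP2,
      ← hE, hnormf, hfPval, hP2val, ← hX, ← hK] at hnn
    nlinarith [hnn]
  -- Cauchy-Schwarz 2 : (K - E*a2)^2 ≤ V * (a2 - a2*a2)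
  have hCS2 : (K - E * a2) ^ 2 ≤ V * (a2 - a2 * a2) := by
    apply cs_discrim
    intro lam
    have hnn : 0 ≤ ∫ x in (-1:ℝ)..1,
        (x ^ 2 * f x ^ 2 * w x
          + ((-(2 * (E + lam * a2))) * (x * f x ^ 2 * w x)
          + ((E + lam * a2) ^ 2 * (f x ^ 2 * w x)
          + ((2 * lam) * (x * f x * P x * w x)
          + ((-(2 * lam * (E + lam * a2))) * (f x * P x * w x)
          + lam ^ 2 * (P x ^ 2 * w x)))))) := by
      apply intervalIntegral.integral_nonneg (by norm_num)
      intro x hx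
      have : x ^ 2 * f x ^ 2 * w x
          + ((-(2 * (E + lam * a2))) * (x * f x ^ 2 * w x)
          + ((E + lam * a2) ^ 2 * (f x ^ 2 * w x)
          + ((2 * lam) * (x * f x * P x * w x)
          + ((-(2 * lam * (E + lam * a2))) * (f x * P x * w x)
          + lam ^ 2 * (P x ^ 2 * w x)))))
          = ((x - E) * f x + lam * (P x - a2 * f x)) ^ 2 * w x := by ring
      rw [this]
      exact mul_nonneg (sq_nonneg _) (hwnn x hx)
    rw [intervalIntegral.integral_add hintxxf ((hintxf.const_mul _).add
        ((hintf.const_mul _).add ((hintxfP.const_mul _).add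
          ((hintfP.const_mul _).add (hintP2.const_mul _))))),
      intervalIntegral.integral_add (hintxf.const_mul _) ((hintf.const_mul _).add
        ((hintxfP.const_mul _).add ((hintfP.const_mul _).add (hintP2.const_mul _)))),
      intervalIntegral.integral_add (hintf.const_mul _)
        ((hintxfP.const_mul _).add ((hintfP.const_mul _).add (hintP2.const_mul _))),
      intervalIntegral.integral_add (hintxfP.const_mul _)
        ((hintfP.const_mul _).add (hintP2.const_mul _)),
      intervalIntegral.integral_add (hintfP.const_mul _) (hintP2.const_mul _),
      intervalIntegral.integral_const_mul, intervalIntegral.integral_const_mul,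
      intervalIntegral.integral_const_mul, intervalIntegral.integral_const_mul,
      intervalIntegral.integral_const_mul,
      hI3, ← hE, hnormf, hfPval, hP2val, ← hK] at hnn
    nlinarith [hnn]
  rw [hP2val]
  exact final_step E V xmax a2 K X hU hxm1 hVnn hEmax ha2pos ha2le1 hXbound hCS1 hCS2
end
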